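/- arXiv:1709.09942 — 7 statements merged into one kernel-verified Lean document; each statement's English description precedes it below -/
import Mathlib

section
/- Let G be an lcsc group and let Λ = Λ(G,H,Γ,W) be a uniform model set in G (W ⊆ H compact with nonempty interior). Then there exist an lcsc group M whose quotient by its identity component is compact (M almost connected), a uniform cut-and-project scheme (G, M, Γ_M), a compact set W_M ⊆ M with nonempty interior, and a finite set F ⊆ π_G(Γ) such that, writing Σ := Λ(G, M, Γ_M, W_M), one has Λ ⊆ F·Σ and every x ∈ F quasi-commensurates Σ: there is a finite set F_x ⊆ π_G(Γ) with xΣ ⊆ ΣF_x and Σx ⊆ F_xΣ. In particular, every Meyer set is contained in a finite union of left-translates of a model set of almost connected type. -/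
/-- A packaged locally compact second countable Hausdorff topological group,
equipped with its Borel structure. -/
structure LCSCGroupPack where
  carrier : Type
  [grp : Group carrier]
  [top : TopologicalSpace carrier]
  [tgrp : IsTopologicalGroup carrier]
  [t2 : T2Space carrier]
  [lc : LocallyCompactSpace carrier]
  [sc : SecondCountableTopology carrier]
  [mb : MeasurableSpace carrier]
  [bs : BorelSpace carrier]

attribute [instance] LCSCGroupPack.grp LCSCGroupPack.top LCSCGroupPack.tgrp LCSCGroupPack.t2
  LCSCGroupPack.lc LCSCGroupPack.sc LCSCGroupPack.mb LCSCGroupPack.bs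

open MeasureTheory Set
open scoped Pointwise ENNReal

/-- A subset of a topological group is relatively dense if finitely many "translates"
by a compact set cover the group: `A * K = G` for some compact `K`. -/
def RelativelyDense {G : Type*} [Group G] [TopologicalSpace G] (A : Set G) : Prop :=
  ∃ K : Set G, IsCompact K ∧ A * K = Set.univ

/-- A uniform lattice: a discrete, cocompact subgroup. -/
def IsUniformLattice {G : Type*} [Group G] [TopologicalSpace G] (Γ : Subgroup G) : Prop :=
  DiscreteTopology Γ ∧ RelativelyDense (Γ : Set G)

/-- A uniform cut-and-project scheme: `Γ ≤ G × H` is a uniform lattice projecting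
injectively to `G` and densely to `H`. -/
structure IsCutAndProject {G H : Type*} [Group G] [TopologicalSpace G] [Group H]
    [TopologicalSpace H] (Γ : Subgroup (G × H)) : Prop where
  lattice : IsUniformLattice Γ
  inj : ∀ x y : Γ, (x : G × H).1 = (y : G × H).1 → x = y
  dense_proj : Dense (Prod.snd '' (Γ : Set (G × H)))

/-- The model set `Λ(G,H,Γ,W) = π_G (Γ ∩ (G × W))`. -/
def modelSet {G H : Type*} [Group G] [TopologicalSpace G] [Group H] [TopologicalSpace H]
    (Γ : Subgroup (G × H)) (W : Set H) : Set G :=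
  Prod.fst '' ((Γ : Set (G × H)) ∩ (Set.univ ×ˢ W))

/-- A regular symmetric window containing the identity: compact, symmetric, `1 ∈ W`,
with dense interior, Haar-null boundary, boundary disjoint from `π_H(Γ)`, and aperiodic. -/
def IsRegularWindow {G : Type*} [Group G] [TopologicalSpace G] (H : Type*) [Group H]
    [TopologicalSpace H] [MeasurableSpace H] (Γ : Subgroup (G × H)) (W : Set H) : Prop :=
  IsCompact W ∧ W⁻¹ = W ∧ (1 : H) ∈ W ∧ W ⊆ closure (interior W) ∧
  (∀ μH : Measure H, μH.IsHaarMeasure → μH (frontier W) = 0) ∧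
  frontier W ∩ (Prod.snd '' (Γ : Set (G × H))) = ∅ ∧
  (∀ h : H, (fun w => h * w) '' W = W → h = 1)

/-- `Λ` is a symmetric Meyer set containing the identity in `G`: a relatively dense
symmetric subset containing `1` of a regular symmetric uniform model set. -/
def IsSymmetricMeyer (G : Type) [Group G] [TopologicalSpace G] (Λ : Set G) : Prop :=
  Λ⁻¹ = Λ ∧ (1 : G) ∈ Λ ∧ RelativelyDense Λ ∧
  ∃ (H : LCSCGroupPack) (Γ : Subgroup (G × H.carrier)) (W : Set H.carrier),
    IsCutAndProject Γ ∧ IsRegularWindow H.carrier Γ W ∧ Λ ⊆ modelSet Γ W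

/-- Every `L^p`-cocycle on the (abstract) group `Γ` is bounded on `A`. -/
def BddLpCocyclesOn (p : ℝ≥0∞) (hp : 1 ≤ p) (Γ : Type*) [Group Γ] (A : Set Γ) : Prop :=
  haveI : Fact (1 ≤ p) := ⟨hp⟩
  ∀ (Y : Type) [MeasurableSpace Y] [StandardBorelSpace Y] (μ : Measure Y) [SigmaFinite μ]
    (π : Γ →* (Lp ℝ p μ ≃ₗᵢ[ℝ] Lp ℝ p μ)) (b : Γ → Lp ℝ p μ),
    (∀ g h : Γ, b (g * h) = b g + (π g) (b h)) →
    ∃ C : ℝ, ∀ x ∈ A, ‖b x‖ ≤ C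

/-- Every weak `L^p`-quasi-cocycle on the (abstract) group `Γ` is bounded on `A`. -/
def WqBddOn (p : ℝ≥0∞) (hp : 1 ≤ p) (Γ : Type*) [Group Γ] (A : Set Γ) : Prop :=
  haveI : Fact (1 ≤ p) := ⟨hp⟩
  ∀ (Y : Type) [MeasurableSpace Y] [StandardBorelSpace Y] (μ : Measure Y) [SigmaFinite μ]
    (π : Γ → (Lp ℝ p μ ≃ₗᵢ[ℝ] Lp ℝ p μ)) (b : Γ → Lp ℝ p μ),
    (∃ D : ℝ, ∀ g h : Γ, ‖b (g * h) - b g - (π g) (b h)‖ ≤ D) →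
    ∃ C : ℝ, ∀ x ∈ A, ‖b x‖ ≤ C

/-- Property (FL^p) for a topological group: every continuous `L^p`-cocycle is bounded. -/
def HasFLp (p : ℝ≥0∞) (hp : 1 ≤ p) (G : Type*) [Group G] [TopologicalSpace G] : Prop :=
  haveI : Fact (1 ≤ p) := ⟨hp⟩
  ∀ (Y : Type) [MeasurableSpace Y] [StandardBorelSpace Y] (μ : Measure Y) [SigmaFinite μ]
    (π : G →* (Lp ℝ p μ ≃ₗᵢ[ℝ] Lp ℝ p μ)) (b : G → Lp ℝ p μ),
    (∀ g h : G, b (g * h) = b g + (π g) (b h)) →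
    Continuous b → (∀ v, Continuous fun g => (π g) v) →
    ∃ C : ℝ, ∀ g : G, ‖b g‖ ≤ C

/-- Property (FFFL^p): every Borel weak `L^p`-quasi-cocycle is bounded. -/
def HasFFFLp (p : ℝ≥0∞) (hp : 1 ≤ p) (G : Type*) [Group G] [TopologicalSpace G]
    [MeasurableSpace G] : Prop :=
  haveI : Fact (1 ≤ p) := ⟨hp⟩
  ∀ (Y : Type) [MeasurableSpace Y] [StandardBorelSpace Y] (μ : Measure Y) [SigmaFinite μ]
    (π : G → (Lp ℝ p μ ≃ₗᵢ[ℝ] Lp ℝ p μ)) (b : G → Lp ℝ p μ),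
    (∃ D : ℝ, ∀ g h : G, ‖b (g * h) - b g - (π g) (b h)‖ ≤ D) →
    (∀ U : Set (Lp ℝ p μ), IsOpen U → MeasurableSet (b ⁻¹' U)) →
    (∀ (v : Lp ℝ p μ) (U : Set (Lp ℝ p μ)), IsOpen U →
      MeasurableSet ((fun g => (π g) v) ⁻¹' U)) →
    ∃ C : ℝ, ∀ g : G, ‖b g‖ ≤ C

/-- a-FL^p-menability of a topological group: there is a continuous `L^p`-cocycle
all of whose sublevel sets have compact closure. -/
def AFLpMenable (p : ℝ≥0∞) (hp : 1 ≤ p) (G : Type*) [Group G] [TopologicalSpace G] : Prop :=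
  haveI : Fact (1 ≤ p) := ⟨hp⟩
  ∃ (Y : Type) (mY : MeasurableSpace Y) (μ : @Measure Y mY),
    @StandardBorelSpace Y mY ∧ SigmaFinite μ ∧
    ∃ (π : G →* (Lp ℝ p μ ≃ₗᵢ[ℝ] Lp ℝ p μ)) (b : G → Lp ℝ p μ),
      (∀ g h : G, b (g * h) = b g + (π g) (b h)) ∧
      Continuous b ∧ (∀ v, Continuous fun g => (π g) v) ∧
      ∀ C : ℝ, IsCompact (closure {g : G | ‖b g‖ ≤ C})

/-- a-FFFL^p-menability of a topological group: there is a Borel weak `L^p`-quasi-cocycle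
all of whose sublevel sets have compact closure. -/
def AFFFLpMenable (p : ℝ≥0∞) (hp : 1 ≤ p) (G : Type*) [Group G] [TopologicalSpace G]
    [MeasurableSpace G] : Prop :=
  haveI : Fact (1 ≤ p) := ⟨hp⟩
  ∃ (Y : Type) (mY : MeasurableSpace Y) (μ : @Measure Y mY),
    @StandardBorelSpace Y mY ∧ SigmaFinite μ ∧
    ∃ (π : G → (Lp ℝ p μ ≃ₗᵢ[ℝ] Lp ℝ p μ)) (b : G → Lp ℝ p μ),
      (∃ D : ℝ, ∀ g h : G, ‖b (g * h) - b g - (π g) (b h)‖ ≤ D) ∧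
      (∀ U : Set (Lp ℝ p μ), IsOpen U → MeasurableSet (b ⁻¹' U)) ∧
      (∀ (v : Lp ℝ p μ) (U : Set (Lp ℝ p μ)), IsOpen U →
        MeasurableSet ((fun g => (π g) v) ⁻¹' U)) ∧
      ∀ C : ℝ, IsCompact (closure {g : G | ‖b g‖ ≤ C})

/-- There is an `L^p`-cocycle on the subgroup generated by `Λ` whose sublevel sets
along `Λ` have compact closure in `G`. -/
def ExistsLpCocycleProperOnSubset (p : ℝ≥0∞) (hp : 1 ≤ p) {G : Type*} [Group G]
    [TopologicalSpace G] (Λ : Set G) : Prop :=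
  haveI : Fact (1 ≤ p) := ⟨hp⟩
  ∃ (Y : Type) (mY : MeasurableSpace Y) (μ : @Measure Y mY),
    @StandardBorelSpace Y mY ∧ SigmaFinite μ ∧
    ∃ (π : ↥(Subgroup.closure Λ) →* (Lp ℝ p μ ≃ₗᵢ[ℝ] Lp ℝ p μ))
      (b : ↥(Subgroup.closure Λ) → Lp ℝ p μ),
      (∀ g h : ↥(Subgroup.closure Λ), b (g * h) = b g + (π g) (b h)) ∧
      ∀ C : ℝ, IsCompact (closure (Subtype.val ''
        {x : ↥(Subgroup.closure Λ) | (x : G) ∈ Λ ∧ ‖b x‖ ≤ C}))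

/-- There is a weak `L^p`-quasi-cocycle on the subgroup generated by `Λ` whose sublevel
sets along `Λ` have compact closure in `G`. -/
def ExistsWqCocycleProperOnSubset (p : ℝ≥0∞) (hp : 1 ≤ p) {G : Type*} [Group G]
    [TopologicalSpace G] (Λ : Set G) : Prop :=
  haveI : Fact (1 ≤ p) := ⟨hp⟩
  ∃ (Y : Type) (mY : MeasurableSpace Y) (μ : @Measure Y mY),
    @StandardBorelSpace Y mY ∧ SigmaFinite μ ∧
    ∃ (π : ↥(Subgroup.closure Λ) → (Lp ℝ p μ ≃ₗᵢ[ℝ] Lp ℝ p μ))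
      (b : ↥(Subgroup.closure Λ) → Lp ℝ p μ),
      (∃ D : ℝ, ∀ g h : ↥(Subgroup.closure Λ), ‖b (g * h) - b g - (π g) (b h)‖ ≤ D) ∧
      ∀ C : ℝ, IsCompact (closure (Subtype.val ''
        {x : ↥(Subgroup.closure Λ) | (x : G) ∈ Λ ∧ ‖b x‖ ≤ C}))

/-- There is an `L^p`-cocycle on `Δ` which is proper on `A` in the discrete sense:
all sublevel sets along `A` are finite. -/
def ExistsLpCocycleFinProperOn (p : ℝ≥0∞) (hp : 1 ≤ p) (Δ : Type*) [Group Δ]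
    (A : Set Δ) : Prop :=
  haveI : Fact (1 ≤ p) := ⟨hp⟩
  ∃ (Y : Type) (mY : MeasurableSpace Y) (μ : @Measure Y mY),
    @StandardBorelSpace Y mY ∧ SigmaFinite μ ∧
    ∃ (π : Δ →* (Lp ℝ p μ ≃ₗᵢ[ℝ] Lp ℝ p μ)) (b : Δ → Lp ℝ p μ),
      (∀ g h : Δ, b (g * h) = b g + (π g) (b h)) ∧
      ∀ C : ℝ, 0 < C → {x ∈ A | ‖b x‖ ≤ C}.Finite

/-- There is a weak `L^p`-quasi-cocycle on `Δ` which is proper on `A` in the discrete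
sense: all sublevel sets along `A` are finite. -/
def ExistsWqCocycleFinProperOn (p : ℝ≥0∞) (hp : 1 ≤ p) (Δ : Type*) [Group Δ]
    (A : Set Δ) : Prop :=
  haveI : Fact (1 ≤ p) := ⟨hp⟩
  ∃ (Y : Type) (mY : MeasurableSpace Y) (μ : @Measure Y mY),
    @StandardBorelSpace Y mY ∧ SigmaFinite μ ∧
    ∃ (π : Δ → (Lp ℝ p μ ≃ₗᵢ[ℝ] Lp ℝ p μ)) (b : Δ → Lp ℝ p μ),
      (∃ D : ℝ, ∀ g h : Δ, ‖b (g * h) - b g - (π g) (b h)‖ ≤ D) ∧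
      ∀ C : ℝ, 0 < C → {x ∈ A | ‖b x‖ ≤ C}.Finite

/-- Property (FFFFL^p): every 2-Freiman weak `L^p`-quasi-cocycle (defect bounded over
`Λ`) is bounded on `Λ`. -/
def Freiman2BddOn (p : ℝ≥0∞) (hp : 1 ≤ p) (Γ : Type*) [Group Γ] (Λ : Set Γ) : Prop :=
  haveI : Fact (1 ≤ p) := ⟨hp⟩
  ∀ (Y : Type) [MeasurableSpace Y] [StandardBorelSpace Y] (μ : Measure Y) [SigmaFinite μ]
    (π : Γ → (Lp ℝ p μ ≃ₗᵢ[ℝ] Lp ℝ p μ)) (b : Γ → Lp ℝ p μ),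
    (∃ D : ℝ, ∀ g ∈ Λ, ∀ h ∈ Λ, ‖b (g * h) - b g - (π g) (b h)‖ ≤ D) →
    ∃ C : ℝ, ∀ x ∈ Λ, ‖b x‖ ≤ C

/-- a-FFFFL^p-menability: there is a 2-Freiman weak `L^p`-quasi-cocycle (defect bounded
over `A`) which is proper on `A` in the discrete sense. -/
def Freiman2FinProperOn (p : ℝ≥0∞) (hp : 1 ≤ p) (Δ : Type*) [Group Δ] (A : Set Δ) : Prop :=
  haveI : Fact (1 ≤ p) := ⟨hp⟩
  ∃ (Y : Type) (mY : MeasurableSpace Y) (μ : @Measure Y mY),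
    @StandardBorelSpace Y mY ∧ SigmaFinite μ ∧
    ∃ (π : Δ → (Lp ℝ p μ ≃ₗᵢ[ℝ] Lp ℝ p μ)) (b : Δ → Lp ℝ p μ),
      (∃ D : ℝ, ∀ g ∈ A, ∀ h ∈ A, ‖b (g * h) - b g - (π g) (b h)‖ ≤ D) ∧
      ∀ C : ℝ, 0 < C → {x ∈ A | ‖b x‖ ≤ C}.Finite

/-!
The quotient of `H` by its identity component `H°` is a totally disconnected locally compact
group, so by van Dantzig it has a compact open subgroup; its preimage `M` is an open, almost
connected subgroup of `H`. Since `π_H(Γ)` is dense and `M` is open, `Γ ∩ (G × M)` is again a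
uniform cut-and-project scheme, and finitely many `π_H(Γ)`-translates of a compact window
`W_M ⊆ M` cover `W`, which gives `Λ ⊆ F Σ`. Finally `Σ` is relatively dense, `Σ D = G` with `D`
compact, and for `x = γ.1 ∈ F` every `σ⁻¹ x σ'` (`σ, σ' ∈ Σ`) that lies in `D` lies in the model
set of the compact window `W_M⁻¹ γ.2 W_M`; by discreteness of `Γ` there are finitely many.
-/

open Topology

section ConnectedComponentOfOne

variable {H : Type*} [Group H] [TopologicalSpace H] [IsTopologicalGroup H]

instance Subgroup.connectedComponentOfOne_normal :
    (Subgroup.connectedComponentOfOne H).Normal where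
  conj_mem n hn g := by
    have hconj : Continuous fun x : H => g * x * g⁻¹ := by fun_prop
    have h := hconj.image_connectedComponent_subset 1 ⟨n, hn, rfl⟩
    rwa [mul_one, mul_inv_cancel] at h


/-- The fibres of `H → H ⧸ H°` are the cosets `a • H° = connectedComponent a`, so the preimage
of the identity component of the quotient is the identity component of `H`. -/
instance totallyDisconnectedSpace_quotient_connectedComponentOfOne :
    TotallyDisconnectedSpace (H ⧸ Subgroup.connectedComponentOfOne H) := by
  set N := Subgroup.connectedComponentOfOne H
  have hfibre (y : H ⧸ N) : IsConnected (((↑) : H → H ⧸ N) ⁻¹' {y}) := by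
    obtain ⟨a, rfl⟩ := QuotientGroup.mk_surjective y
    rw [← image_singleton, QuotientGroup.preimage_image_mk_eq_mul, singleton_mul]
    exact isConnected_connectedComponent.image _ (by fun_prop)
  have hpre := (QuotientGroup.isQuotientMap_mk N).isCoinducing.preimage_connectedComponent
    hfibre 1
  rw [totallyDisconnectedSpace_iff_connectedComponent_one, eq_singleton_iff_unique_mem]
  refine ⟨mem_connectedComponent, fun y hy => ?_⟩
  obtain ⟨x, rfl⟩ := QuotientGroup.mk_surjective y
  have hx : x ∈ N := by
    rw [← QuotientGroup.mk_one] at hy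
    exact (hpre ▸ hy : x ∈ connectedComponent (1 : H))
  exact (QuotientGroup.eq_one_iff x).2 hx

end ConnectedComponentOfOne

/-- Van Dantzig's theorem. If `W` is a compact clopen neighbourhood of `1` and `W * V ⊆ W`, then
the subgroup generated by `V ∩ V⁻¹` maps `W` into itself, hence lies in `W`. -/
theorem exists_isOpen_isCompact_subgroup {Q : Type*} [Group Q] [TopologicalSpace Q]
    [IsTopologicalGroup Q] [LocallyCompactSpace Q] [T2Space Q] [TotallyDisconnectedSpace Q] :
    ∃ U : Subgroup Q, IsOpen (U : Set Q) ∧ IsCompact (U : Set Q) := by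
  obtain ⟨K, hK, hK1⟩ := exists_compact_mem_nhds (1 : Q)
  obtain ⟨W, hWclopen, hW1, hWK⟩ :=
    loc_compact_Haus_tot_disc_of_zero_dim.mem_nhds_iff.1 (interior_mem_nhds.2 hK1)
  have hW : IsCompact W := hK.of_isClosed_subset hWclopen.isClosed (hWK.trans interior_subset)
  obtain ⟨V, hV, hWV⟩ := compact_open_separated_mul_right hW hWclopen.isOpen subset_rfl
  set U := Subgroup.closure (V ∩ V⁻¹)
  have hUW : (U : Set Q) ⊆ W := by
    intro x hx
    suffices ∀ w ∈ W, w * x ∈ W by simpa using this 1 hW1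
    induction hx using Subgroup.closure_induction'' with
    | mem y hy => exact fun w hw => hWV (mul_mem_mul hw hy.1)
    | inv_mem y hy => exact fun w hw => hWV (mul_mem_mul hw hy.2)
    | one => simp
    | mul y z _ _ hy hz => exact fun w hw => mul_assoc w y z ▸ hz _ (hy w hw)
  have hUopen : IsOpen (U : Set Q) :=
    U.isOpen_of_mem_nhds (g := 1) <|
      Filter.mem_of_superset (Filter.inter_mem hV (inv_mem_nhds_one Q hV)) Subgroup.subset_closure
  exact ⟨U, hUopen, hW.of_isClosed_subset (U.isClosed_of_isOpen hUopen) hUW⟩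

theorem IsOpenMap.exists_isCompact_subset_image {X Y : Type*} [TopologicalSpace X]
    [TopologicalSpace Y] [WeaklyLocallyCompactSpace X] {f : X → Y} (hf : IsOpenMap f)
    (hsurj : Function.Surjective f) {K : Set Y} (hK : IsCompact K) :
    ∃ L : Set X, IsCompact L ∧ K ⊆ f '' L := by
  choose C hC hCx using exists_compact_mem_nhds (X := X)
  have hcover : K ⊆ ⋃ x, f '' interior (C x) := fun y _ =>
    let ⟨x, hx⟩ := hsurj y
    mem_iUnion.2 ⟨x, x, mem_interior_iff_mem_nhds.2 (hCx x), hx⟩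
  obtain ⟨t, ht⟩ := hK.elim_finite_subcover _ (fun x => hf _ isOpen_interior) hcover
  refine ⟨⋃ x ∈ t, C x, t.isCompact_biUnion fun x _ => hC x, ht.trans ?_⟩
  exact iUnion₂_subset fun x hx => image_mono <| interior_subset.trans (subset_biUnion_of_mem hx)

section AlmostConnected

variable {H : Type*} [Group H] [TopologicalSpace H] [IsTopologicalGroup H]

theorem compactSpace_connectedComponents_of_subset_mul {M : Subgroup H}
    (hM : IsOpen (M : Set H)) {L : Set H} (hL : IsCompact L)
    (hML : (M : Set H) ⊆ L * connectedComponent 1) : CompactSpace (ConnectedComponents M) := by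
  have hMclopen : IsClopen (M : Set H) := ⟨M.isClosed_of_isOpen hM, hM⟩
  have hsurj : ConnectedComponents.mk '' (Subtype.val ⁻¹' L : Set M) = univ := by
    refine eq_univ_of_forall fun y => ?_
    obtain ⟨m, rfl⟩ := ConnectedComponents.surjective_coe y
    obtain ⟨l, hl, n, hn, hln⟩ := hML m.2
    have hcomp : (m : H) ∈ connectedComponent l := by
      rw [← hln, ← mul_one l, ← smul_connectedComponent, mul_one]
      exact smul_mem_smul_set hn
    have hlM : l ∈ M := by
      rw [eq_mul_inv_of_mul_eq hln]
      exact M.mul_mem m.2 (M.inv_mem (hMclopen.connectedComponent_subset M.one_mem hn))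
    rw [← hMclopen.connectedComponentIn_eq hlM, connectedComponentIn_eq_image hlM] at hcomp
    obtain ⟨m', hm', hm'm⟩ := hcomp
    obtain rfl : m' = m := Subtype.ext hm'm
    exact ⟨⟨l, hlM⟩, hl, (ConnectedComponents.coe_eq_coe'.2 hm').symm⟩
  have hS : IsCompact (Subtype.val ⁻¹' L : Set M) :=
    hMclopen.isClosed.isClosedEmbedding_subtypeVal.isCompact_preimage hL
  exact ⟨hsurj ▸ hS.image ConnectedComponents.continuous_coe⟩

variable (H) in
/-- `M` is the preimage of a compact open subgroup of the totally disconnected group `H ⧸ H°`. -/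
theorem exists_isOpen_subgroup_compactSpace_connectedComponents [LocallyCompactSpace H]
    [T2Space H] : ∃ M : Subgroup H, IsOpen (M : Set H) ∧ CompactSpace (ConnectedComponents M) := by
  set N := Subgroup.connectedComponentOfOne H
  obtain ⟨U, hUopen, hUcompact⟩ := exists_isOpen_isCompact_subgroup (Q := H ⧸ N)
  obtain ⟨L, hL, hUL⟩ :=
    QuotientGroup.isOpenMap_coe.exists_isCompact_subset_image QuotientGroup.mk_surjective hUcompact
  have hM : IsOpen (U.comap (QuotientGroup.mk' N) : Set H) :=
    hUopen.preimage QuotientGroup.continuous_mk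
  exact ⟨_, hM, compactSpace_connectedComponents_of_subset_mul hM hL <|
    (preimage_mono hUL).trans (QuotientGroup.preimage_image_mk_eq_mul N L).subset⟩

end AlmostConnected

section Covering

variable {X : Type*} [Group X] [TopologicalSpace X] [IsTopologicalGroup X] {P U : Set X}

theorem Dense.exists_mul_mem (hP : Dense P) (hU : IsOpen U) (hUne : U.Nonempty) (x : X) :
    ∃ p ∈ P, x * p ∈ U := by
  obtain ⟨u, hu⟩ := hUne
  exact hP.exists_mem_open (hU.preimage (continuous_const_mul x))
    ⟨x⁻¹ * u, show x * (x⁻¹ * u) ∈ U by rwa [mul_inv_cancel_left]⟩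

theorem IsCompact.exists_finite_subset_forall_exists_mul_mem {K : Set X} (hK : IsCompact K)
    (hU : IsOpen U) (hPU : ∀ x, ∃ p ∈ P, x * p ∈ U) :
    ∃ t ⊆ P, t.Finite ∧ ∀ k ∈ K, ∃ p ∈ t, k * p ∈ U := by
  have hcover : K ⊆ ⋃ p ∈ P, (· * p) ⁻¹' U := fun k _ =>
    let ⟨p, hp, hkp⟩ := hPU k
    mem_iUnion₂.2 ⟨p, hp, hkp⟩
  obtain ⟨t, htP, htfin, hKt⟩ := hK.elim_finite_subcover_image
    (fun p _ => hU.preimage (continuous_mul_const p)) hcover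
  refine ⟨t, htP, htfin, fun k hk => ?_⟩
  obtain ⟨p, hp, hkp⟩ := mem_iUnion₂.1 (hKt hk)
  exact ⟨p, hp, hkp⟩

theorem Dense.exists_finite_subset_mul_window [WeaklyLocallyCompactSpace X] (hP : Dense P)
    {M : Subgroup X} (hM : IsOpen (M : Set X)) {W : Set X} (hW : IsCompact W) :
    ∃ t ⊆ P, t.Finite ∧ ∃ WM : Set M, IsCompact WM ∧ (interior WM).Nonempty ∧
      W ⊆ t * Subtype.val '' WM := by
  obtain ⟨t, htP, htfin, hWt⟩ := hW.inv.exists_finite_subset_forall_exists_mul_mem hM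
    (hP.exists_mul_mem hM ⟨1, M.one_mem⟩)
  obtain ⟨K₁, hK₁, hK₁1⟩ := exists_compact_mem_nhds (1 : X)
  refine ⟨t, htP, htfin, Subtype.val ⁻¹' (t⁻¹ * W ∪ K₁),
    (M.isClosed_of_isOpen hM).isClosedEmbedding_subtypeVal.isCompact_preimage
      ((htfin.inv.isCompact.mul hW).union hK₁), ⟨1, ?_⟩, fun w hw => ?_⟩
  · exact mem_interior_iff_mem_nhds.2 <| continuous_subtype_val.continuousAt.preimage_mem_nhds <|
      Filter.mem_of_superset hK₁1 subset_union_right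
  · obtain ⟨p, hpt, hpw⟩ := hWt w⁻¹ (inv_mem_inv.2 hw)
    have hpwM : p⁻¹ * w ∈ M := by simpa using M.inv_mem hpw
    exact ⟨p, hpt, p⁻¹ * w, ⟨⟨_, hpwM⟩, Or.inl (mul_mem_mul (inv_mem_inv.2 hpt) hw), rfl⟩,
      mul_inv_cancel_left p w⟩

end Covering

theorem IsUniformLattice.comap {A X : Type*} [Group A] [TopologicalSpace A] [Group X]
    [TopologicalSpace X] [IsTopologicalGroup X] {Γ : Subgroup X} (hΓ : IsUniformLattice Γ)
    (φ : A →* X) (hφ : IsOpenEmbedding φ) (hΓφ : (Γ : Set X) * range φ = univ) :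
    IsUniformLattice (Γ.comap φ) := by
  obtain ⟨hdisc, K, hK, hΓK⟩ := hΓ
  have hrange : IsOpen (φ.range : Set X) := by simpa using hφ.isOpen_range
  refine ⟨DiscreteTopology.of_continuous_injective (f := fun a : Γ.comap φ => (⟨φ a, a.2⟩ : Γ))
    (by fun_prop) fun a b hab => Subtype.ext (hφ.injective (congrArg Subtype.val hab)), ?_⟩
  obtain ⟨t, htΓ, htfin, hKt⟩ := hK.inv.exists_finite_subset_forall_exists_mul_mem hrange
    fun x => by
      obtain ⟨γ, hγ, _, ⟨c, rfl⟩, hγc⟩ := hΓφ.symm ▸ mem_univ x⁻¹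
      refine ⟨γ, hγ, c⁻¹, ?_⟩
      rw [map_inv, inv_eq_iff_eq_inv, mul_inv_rev, ← hγc]
      exact (inv_mul_cancel_left γ (φ c)).symm
  refine ⟨φ ⁻¹' (t⁻¹ * K), hφ.isInducing.isCompact_preimage
    (by simpa using φ.range.isClosed_of_isOpen hrange) (htfin.inv.isCompact.mul hK),
    eq_univ_of_forall fun a => ?_⟩
  obtain ⟨γ, hγ, k, hk, hγk⟩ := hΓK.symm ▸ mem_univ (φ a)
  obtain ⟨p, hpt, b, hb⟩ := hKt k⁻¹ (inv_mem_inv.2 hk)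
  refine ⟨a * b, ?_, b⁻¹, ?_, mul_inv_cancel_right a b⟩
  · show φ (a * b) ∈ Γ
    rw [map_mul, hb, ← hγk, mul_assoc, mul_inv_cancel_left]
    exact Γ.mul_mem hγ (htΓ hpt)
  · show φ b⁻¹ ∈ t⁻¹ * K
    rw [map_inv, hb, mul_inv_rev, inv_inv]
    exact mul_mem_mul (inv_mem_inv.2 hpt) hk

section ModelSet

variable {G H : Type*} [Group G] [TopologicalSpace G] [Group H] [TopologicalSpace H]
  {Γ : Subgroup (G × H)}

/-- The lattice `Γ ∩ (G × M)`, viewed in `G × M`. -/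
def Subgroup.restrictSnd (Γ : Subgroup (G × H)) (M : Subgroup H) : Subgroup (G × M) :=
  Γ.comap ((MonoidHom.id G).prodMap M.subtype)

theorem modelSet_restrictSnd (M : Subgroup H) (W : Set M) :
    modelSet (Γ.restrictSnd M) W = modelSet Γ (Subtype.val '' W) := by
  ext g
  constructor
  · rintro ⟨⟨g, m⟩, ⟨hΓ, -, hm⟩, rfl⟩
    exact ⟨(g, m), ⟨hΓ, trivial, m, hm, rfl⟩, rfl⟩
  · rintro ⟨⟨g, _⟩, ⟨hΓ, -, m, hm, rfl⟩, rfl⟩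
    exact ⟨(g, m), ⟨hΓ, trivial, hm⟩, rfl⟩

theorem modelSet_subset_fst_image (W : Set H) : modelSet Γ W ⊆ Prod.fst '' (Γ : Set (G × H)) :=
  image_mono inter_subset_left

theorem modelSet_inv (W : Set H) : (modelSet Γ W)⁻¹ = modelSet Γ W⁻¹ := by
  ext g
  constructor
  · rintro ⟨ξ, ⟨hξ, -, hW⟩, hξg⟩
    exact ⟨ξ⁻¹, ⟨Γ.inv_mem hξ, trivial, by simpa using hW⟩, by simp [hξg]⟩
  · rintro ⟨ξ, ⟨hξ, -, hW⟩, rfl⟩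
    exact ⟨ξ⁻¹, ⟨Γ.inv_mem hξ, trivial, hW⟩, rfl⟩

theorem modelSet_subset_mul_modelSet {T : Set (G × H)} (hT : T ⊆ Γ) {W V : Set H}
    (hW : W ⊆ Prod.snd '' T * V) : modelSet Γ W ⊆ Prod.fst '' T * modelSet Γ V := by
  rintro _ ⟨ξ, ⟨hξ, -, hξW⟩, rfl⟩
  obtain ⟨_, ⟨δ, hδ, rfl⟩, v, hv, hδv⟩ := hW hξW
  refine ⟨δ.1, mem_image_of_mem _ hδ, (δ⁻¹ * ξ).1, ⟨δ⁻¹ * ξ, ⟨Γ.mul_mem (Γ.inv_mem (hT hδ)) hξ,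
    trivial, ?_⟩, rfl⟩, mul_inv_cancel_left δ.1 ξ.1⟩
  show δ.2⁻¹ * ξ.2 ∈ V
  rwa [← hδv, inv_mul_cancel_left]

theorem modelSet_inter_finite [IsTopologicalGroup G] [IsTopologicalGroup H] [T2Space G]
    [T2Space H] [DiscreteTopology Γ] {W : Set H} (hW : IsCompact W) {D : Set G}
    (hD : IsCompact D) : (modelSet Γ W ∩ D).Finite := by
  have hfin : ((Γ : Set (G × H)) ∩ D ×ˢ W).Finite :=
    ((hD.prod hW).inter_left Subgroup.isClosed_of_discrete).finite <|
      isDiscrete_iff_discreteTopology.2 (DiscreteTopology.of_subset ‹_› inter_subset_left)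
  refine (hfin.image Prod.fst).subset ?_
  rintro _ ⟨⟨ξ, ⟨hξ, -, hξW⟩, rfl⟩, hξD⟩
  exact ⟨ξ, ⟨hξ, hξD, hξW⟩, rfl⟩

variable [IsTopologicalGroup G] [IsTopologicalGroup H]

theorem IsCutAndProject.restrictSnd (hΓ : IsCutAndProject Γ) {M : Subgroup H}
    (hM : IsOpen (M : Set H)) : IsCutAndProject (Γ.restrictSnd M) where
  lattice := by
    refine hΓ.lattice.comap _ (IsOpenEmbedding.id.prodMap hM.isOpenEmbedding_subtypeVal) ?_
    refine eq_univ_of_forall fun x => ?_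
    obtain ⟨_, ⟨ξ, hξ, rfl⟩, hξx⟩ :=
      hΓ.dense_proj.exists_mul_mem hM ⟨1, M.one_mem⟩ x.2⁻¹
    refine ⟨ξ, hξ, ξ⁻¹ * x, ⟨(ξ.1⁻¹ * x.1, ⟨ξ.2⁻¹ * x.2, ?_⟩), rfl⟩, mul_inv_cancel_left ξ x⟩
    simpa using M.inv_mem hξx
  inj x y hxy := Subtype.ext <| Prod.ext hxy <| Subtype.ext <|
    congrArg (fun z : Γ => (z : G × H).2) (hΓ.inj ⟨_, x.2⟩ ⟨_, y.2⟩ hxy)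
  dense_proj := by
    refine (hΓ.dense_proj.preimage hM.isOpenMap_subtype_val).mono ?_
    rintro m ⟨ξ, hξ, hξm⟩
    exact ⟨(ξ.1, m), show (ξ.1, (m : H)) ∈ Γ from hξm ▸ hξ, rfl⟩

/-- For `(g, 1) = ζ k` with `ζ ∈ Γ`, `k ∈ K`, move `ζ.2` into the interior of `V` by one of
finitely many `δ ∈ Γ`; then `g ∈ (ζ δ).1 · δ.1⁻¹ π_G(K)`. -/
theorem IsCutAndProject.relativelyDense_modelSet (hΓ : IsCutAndProject Γ) {V : Set H}
    (hV : (interior V).Nonempty) : RelativelyDense (modelSet Γ V) := by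
  obtain ⟨-, K, hK, hΓK⟩ := hΓ.lattice
  obtain ⟨T, hTΓ, hTfin, hKT⟩ := exists_subset_image_finite_and.1 <|
    (hK.image continuous_snd).inv.exists_finite_subset_forall_exists_mul_mem isOpen_interior
      (hΓ.dense_proj.exists_mul_mem isOpen_interior hV)
  refine ⟨(Prod.fst '' T)⁻¹ * Prod.fst '' K,
    (hTfin.image _).inv.isCompact.mul (hK.image continuous_fst), eq_univ_of_forall fun g => ?_⟩
  obtain ⟨ζ, hζ, k, hk, hζk⟩ := hΓK.symm ▸ mem_univ (g, (1 : H))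
  have hζ2 : ζ.2 = k.2⁻¹ := eq_inv_of_mul_eq_one_left (congrArg Prod.snd hζk)
  obtain ⟨_, ⟨δ, hδ, rfl⟩, hζδ⟩ := hKT ζ.2 (hζ2 ▸ inv_mem_inv.2 (mem_image_of_mem _ hk))
  refine ⟨(ζ * δ).1, ⟨ζ * δ, ⟨Γ.mul_mem hζ (hTΓ hδ), trivial, interior_subset hζδ⟩, rfl⟩,
    δ.1⁻¹ * k.1, mul_mem_mul (inv_mem_inv.2 (mem_image_of_mem _ hδ)) (mem_image_of_mem _ hk), ?_⟩
  show ζ.1 * δ.1 * (δ.1⁻¹ * k.1) = g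
  rw [mul_assoc, mul_inv_cancel_left]
  exact congrArg Prod.fst hζk

end ModelSet

section QuasiCommensurate

variable {G H : Type*} [Group G] [TopologicalSpace G] [IsTopologicalGroup G] [T2Space G]
  [Group H] [TopologicalSpace H] [IsTopologicalGroup H] [T2Space H] {Γ : Subgroup (G × H)}
  {V : Set H}

/-- With `x = γ.1` and `Σ D = G`, write `x σ' = σ (σ⁻¹ x σ')`; the factor `σ⁻¹ x σ'` lies in the
finite set `Λ(V⁻¹ γ.2 V) ∩ D`. -/
theorem IsCutAndProject.exists_finite_singleton_mul_modelSet_subset (hΓ : IsCutAndProject Γ)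
    (hV : IsCompact V) (hVint : (interior V).Nonempty) {x : G}
    (hx : x ∈ Prod.fst '' (Γ : Set (G × H))) :
    ∃ F : Set G, F.Finite ∧ F ⊆ Prod.fst '' (Γ : Set (G × H)) ∧
      {x} * modelSet Γ V ⊆ modelSet Γ V * F := by
  obtain ⟨γ, hγ, rfl⟩ := hx
  obtain ⟨D, hD, hdense⟩ := hΓ.relativelyDense_modelSet hVint
  have : DiscreteTopology Γ := hΓ.lattice.1
  refine ⟨modelSet Γ (V⁻¹ * ({γ.2} * V)) ∩ D,
    modelSet_inter_finite (hV.inv.mul (isCompact_singleton.mul hV)) hD,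
    inter_subset_left.trans (modelSet_subset_fst_image _), ?_⟩
  rintro _ ⟨_, rfl, _, ⟨ζ', ⟨hζ', -, hζ'V⟩, rfl⟩, rfl⟩
  obtain ⟨_, ⟨ζ, ⟨hζ, -, hζV⟩, rfl⟩, d, hd, hζd⟩ := hdense.symm ▸ mem_univ (γ.1 * ζ'.1)
  refine ⟨ζ.1, ⟨ζ, ⟨hζ, trivial, hζV⟩, rfl⟩, d, ⟨⟨ζ⁻¹ * (γ * ζ'), ⟨?_, trivial, ?_⟩, ?_⟩, hd⟩,
    hζd⟩
  · exact Γ.mul_mem (Γ.inv_mem hζ) (Γ.mul_mem hγ hζ')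
  · exact mul_mem_mul (inv_mem_inv.2 hζV) (mul_mem_mul rfl hζ'V)
  · show ζ.1⁻¹ * (γ.1 * ζ'.1) = d
    rw [← hζd, inv_mul_cancel_left]

/-- The right-hand inclusion is the left-hand one for `x⁻¹` and the window `V⁻¹`, inverted. -/
theorem IsCutAndProject.exists_finite_quasiCommensurating (hΓ : IsCutAndProject Γ)
    (hV : IsCompact V) (hVint : (interior V).Nonempty) {x : G}
    (hx : x ∈ Prod.fst '' (Γ : Set (G × H))) :
    ∃ F : Set G, F.Finite ∧ F ⊆ Prod.fst '' (Γ : Set (G × H)) ∧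
      {x} * modelSet Γ V ⊆ modelSet Γ V * F ∧ modelSet Γ V * {x} ⊆ F * modelSet Γ V := by
  obtain ⟨F₁, hF₁, hF₁Γ, hxF₁⟩ := hΓ.exists_finite_singleton_mul_modelSet_subset hV hVint hx
  obtain ⟨F₂, hF₂, hF₂Γ, hxF₂⟩ := hΓ.exists_finite_singleton_mul_modelSet_subset hV.inv
    (hVint.inv.mono (interior_maximal (inv_subset_inv.2 interior_subset) isOpen_interior.inv))
    ((Γ.map (MonoidHom.fst G H)).inv_mem hx)
  have hF₂Γ' : F₂⁻¹ ⊆ Prod.fst '' (Γ : Set (G × H)) := fun f hf =>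
    inv_inv f ▸ (Γ.map (MonoidHom.fst G H)).inv_mem (hF₂Γ hf)
  have hxF₂' := inv_subset_inv.2 hxF₂
  simp only [mul_inv_rev, inv_singleton, inv_inv, modelSet_inv] at hxF₂'
  exact ⟨F₁ ∪ F₂⁻¹, hF₁.union hF₂.inv, union_subset hF₁Γ hF₂Γ',
    hxF₁.trans (mul_subset_mul_left subset_union_left),
    hxF₂'.trans (mul_subset_mul_right subset_union_right)⟩

end QuasiCommensurate

theorem modelSet_subset_enlarged_almostConnected_modelSet_general
    (G : Type) [Group G] [TopologicalSpace G] [IsTopologicalGroup G] [T2Space G]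
    (H : Type) [Group H] [TopologicalSpace H] [IsTopologicalGroup H] [T2Space H]
    [LocallyCompactSpace H] [SecondCountableTopology H]
    (Γ : Subgroup (G × H)) (hCP : IsCutAndProject Γ)
    (W : Set H) (hWc : IsCompact W) :
    ∃ (M : LCSCGroupPack), CompactSpace (ConnectedComponents M.carrier) ∧
      ∃ (ΓM : Subgroup (G × M.carrier)), IsCutAndProject ΓM ∧
        ∃ (WM : Set M.carrier), IsCompact WM ∧ (interior WM).Nonempty ∧
          ∃ (F : Set G), F.Finite ∧ F ⊆ Prod.fst '' (Γ : Set (G × H)) ∧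
            modelSet Γ W ⊆ F * modelSet ΓM WM ∧
            ∀ x ∈ F, ∃ Fx : Set G, Fx.Finite ∧ Fx ⊆ Prod.fst '' (Γ : Set (G × H)) ∧
              {x} * modelSet ΓM WM ⊆ modelSet ΓM WM * Fx ∧
              modelSet ΓM WM * {x} ⊆ Fx * modelSet ΓM WM := by
  obtain ⟨M, hM, hMcc⟩ := exists_isOpen_subgroup_compactSpace_connectedComponents H
  have : LocallyCompactSpace M := hM.locallyCompactSpace
  have : SecondCountableTopology M :=
    TopologicalSpace.secondCountableTopology_induced M H Subtype.val
  let : MeasurableSpace M := borel M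
  have : BorelSpace M := ⟨rfl⟩
  obtain ⟨T, hTΓ, hTfin, WM, hWMc, hWMint, hWT⟩ :=
    exists_subset_image_finite_and.1 (hCP.dense_proj.exists_finite_subset_mul_window hM hWc)
  have hVint : (interior (Subtype.val '' WM)).Nonempty :=
    (hWMint.image _).mono (hM.isOpenMap_subtype_val.image_interior_subset WM)
  refine ⟨⟨M⟩, hMcc, Γ.restrictSnd M, hCP.restrictSnd hM, WM, hWMc, hWMint, Prod.fst '' T,
    hTfin.image _, image_mono hTΓ, ?_, fun x hx => ?_⟩ <;> rw [modelSet_restrictSnd]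
  · exact modelSet_subset_mul_modelSet hTΓ hWT
  · exact hCP.exists_finite_quasiCommensurating (hWMc.image continuous_subtype_val) hVint
      (image_mono hTΓ hx)

/-- Every uniform model set `Λ = Λ(G,H,Γ,W)` is contained in `F·Σ` for a
model set `Σ` of almost connected type and a finite set `F ⊆ π_G(Γ)` each of whose
elements quasi-commensurates `Σ`. -/
theorem modelSet_subset_enlarged_almostConnected_modelSet
    (G : Type) [Group G] [TopologicalSpace G] [IsTopologicalGroup G] [T2Space G]
    [LocallyCompactSpace G] [SecondCountableTopology G]
    (H : Type) [Group H] [TopologicalSpace H] [IsTopologicalGroup H] [T2Space H]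
    [LocallyCompactSpace H] [SecondCountableTopology H]
    (Γ : Subgroup (G × H)) (hCP : IsCutAndProject Γ)
    (W : Set H) (hWc : IsCompact W) (hWint : (interior W).Nonempty) :
    ∃ (M : LCSCGroupPack), CompactSpace (ConnectedComponents M.carrier) ∧
      ∃ (ΓM : Subgroup (G × M.carrier)), IsCutAndProject ΓM ∧
        ∃ (WM : Set M.carrier), IsCompact WM ∧ (interior WM).Nonempty ∧
          ∃ (F : Set G), F.Finite ∧ F ⊆ Prod.fst '' (Γ : Set (G × H)) ∧
            modelSet Γ W ⊆ F * modelSet ΓM WM ∧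
            ∀ x ∈ F, ∃ Fx : Set G, Fx.Finite ∧ Fx ⊆ Prod.fst '' (Γ : Set (G × H)) ∧
              {x} * modelSet ΓM WM ⊆ modelSet ΓM WM * Fx ∧
              modelSet ΓM WM * {x} ⊆ Fx * modelSet ΓM WM :=
  modelSet_subset_enlarged_almostConnected_modelSet_general G H Γ hCP W hWc
end

section
/- Let 1 < p < ∞, let (Λ, Λ^∞) and (Σ, Σ^∞) be approximate groups, and let φ : Λ^∞ → Σ^∞ be a quasimorphism with φ(Λ) ⊆ Σ, i.e. the set {φ(h)⁻¹φ(g)⁻¹φ(gh) : g, h ∈ Λ^∞} is finite. Assume: (a) every weak L^p-quasi-cocycle (π, b) on Λ^∞ has b bounded on Λ (Property (FFFL^p) of (Λ, Λ^∞)); and (b) there exists a weak L^p-quasi-cocycle (π', b') on Σ^∞ such that for every C > 0 the set {g ∈ Σ : ‖b'(g)‖ ≤ C} is finite (a-FFFL^p-menability of (Σ, Σ^∞)). Then φ(Λ) is finite. -/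
open MeasureTheory Set
open scoped Pointwise ENNReal

/-!
Pulling a weak quasi-cocycle `(π', b')` on `Δ` back along a quasimorphism `φ` gives a weak
quasi-cocycle `(π' ∘ φ, b' ∘ φ)` on `Γ`: writing `φ (g h) = φ g φ h d` with `d` in the finite
defect set of `φ`, the extra defect is at most one more defect of `b'` plus `max ‖b' d‖`.
Property (FFFL^p) bounds `b' ∘ φ` on `Λ`, so `φ(Λ)` lies in a sublevel set of `b'` along `S`,
which is finite by properness.
-/


section QuasiCocycle

variable {Δ : Type*} [Group Δ] {R : Type*} [Semiring R]
  {E : Type*} [SeminormedAddCommGroup E] [Module R E]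

def IsWeakQuasiCocycle (π : Δ → E ≃ₗᵢ[R] E) (b : Δ → E) : Prop :=
  ∃ D : ℝ, ∀ g h : Δ, ‖b (g * h) - b g - π g (b h)‖ ≤ D

theorem norm_defect_mul_mul_le {π : Δ → E ≃ₗᵢ[R] E} {b : Δ → E} {D M : ℝ}
    (hD : ∀ g h : Δ, ‖b (g * h) - b g - π g (b h)‖ ≤ D) {d : Δ} (hd : ‖b d‖ ≤ M) (x y : Δ) :
    ‖b (x * y * d) - b x - π x (b y)‖ ≤ D + D + M :=
  calc ‖b (x * y * d) - b x - π x (b y)‖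
      = ‖(b (x * y * d) - b (x * y) - π (x * y) (b d))
          + (b (x * y) - b x - π x (b y)) + π (x * y) (b d)‖ := by congr 1; abel
    _ ≤ ‖b (x * y * d) - b (x * y) - π (x * y) (b d)‖
          + ‖b (x * y) - b x - π x (b y)‖ + ‖π (x * y) (b d)‖ := norm_add₃_le
    _ ≤ D + D + M := by
        rw [LinearIsometryEquiv.norm_map]
        gcongr
        exacts [hD _ _, hD _ _]

end QuasiCocycle

section Quasimorphism

variable {Γ Δ : Type*} [Group Γ] [Group Δ]

def quasimorphismDefects (φ : Γ → Δ) : Set Δ :=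
  {d | ∃ g h : Γ, d = (φ h)⁻¹ * (φ g)⁻¹ * φ (g * h)}

theorem map_mul_eq_mul_mul_defect (φ : Γ → Δ) (g h : Γ) :
    ∃ d ∈ quasimorphismDefects φ, φ (g * h) = φ g * φ h * d :=
  ⟨_, ⟨g, h, rfl⟩, by group⟩

theorem IsWeakQuasiCocycle.comp_quasimorphism {R : Type*} [Semiring R]
    {E : Type*} [SeminormedAddCommGroup E] [Module R E]
    {π : Δ → E ≃ₗᵢ[R] E} {b : Δ → E} (hb : IsWeakQuasiCocycle π b) {φ : Γ → Δ}
    (hφ : (quasimorphismDefects φ).Finite) :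
    IsWeakQuasiCocycle (π ∘ φ) (b ∘ φ) := by
  obtain ⟨D, hD⟩ := hb
  obtain ⟨M, hM⟩ := (hφ.image (‖b ·‖)).bddAbove
  refine ⟨D + D + M, fun g h => ?_⟩
  obtain ⟨d, hd, hgh⟩ := map_mul_eq_mul_mul_defect φ g h
  simpa only [Function.comp_apply, hgh] using
    norm_defect_mul_mul_le hD (hM (mem_image_of_mem _ hd)) (φ g) (φ h)

end Quasimorphism

theorem FFFLp_rigidity_of_quasimorphism_general
    (p : ℝ≥0∞) (hp1 : 1 < p)
    (Γ : Type) [Group Γ] (Λ : Set Γ)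
    (Δ : Type) [Group Δ] (S : Set Δ)
    (φ : Γ → Δ)
    (hqm : {d : Δ | ∃ g h : Γ, d = (φ h)⁻¹ * (φ g)⁻¹ * φ (g * h)}.Finite)
    (hφ : φ '' Λ ⊆ S)
    (hT : WqBddOn p hp1.le Γ Λ)
    (hM : ExistsWqCocycleFinProperOn p hp1.le Δ S) :
    (φ '' Λ).Finite := by
  have : Fact (1 ≤ p) := ⟨hp1.le⟩
  obtain ⟨Y, mY, μ, hSB, hSF, π', b', hb', hproper⟩ := hM
  obtain ⟨C, hC⟩ := hT Y μ (π' ∘ φ) (b' ∘ φ)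
    (IsWeakQuasiCocycle.comp_quasimorphism hb' (φ := φ) hqm)
  refine (hproper (max C 1) (lt_max_of_lt_right one_pos)).subset ?_
  rintro _ ⟨x, hx, rfl⟩
  exact ⟨hφ (mem_image_of_mem φ hx), (hC x hx).trans (le_max_left _ _)⟩

/-- If the approximate group `(Λ, Λ^∞)` has Property (FFFL^p), the
approximate group `(S, S^∞)` is a-FFFL^p-menable, and `φ : Λ^∞ → S^∞` is a quasimorphism
with `φ(Λ) ⊆ S`, then `φ(Λ)` is finite. -/
theorem FFFLp_rigidity_of_quasimorphism
    (p : ℝ≥0∞) (hp1 : 1 < p) (hp2 : p < ⊤)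
    (Γ : Type) [Group Γ] (Λ : Set Γ) (hΛsym : Λ⁻¹ = Λ) (hΛ1 : (1 : Γ) ∈ Λ)
    (hΛap : ∃ F : Set Γ, F.Finite ∧ Λ * Λ ⊆ Λ * F) (hΛgen : Subgroup.closure Λ = ⊤)
    (Δ : Type) [Group Δ] (S : Set Δ) (hSsym : S⁻¹ = S) (hS1 : (1 : Δ) ∈ S)
    (hSap : ∃ F : Set Δ, F.Finite ∧ S * S ⊆ S * F) (hSgen : Subgroup.closure S = ⊤)
    (φ : Γ → Δ)
    (hqm : {d : Δ | ∃ g h : Γ, d = (φ h)⁻¹ * (φ g)⁻¹ * φ (g * h)}.Finite)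
    (hφ : φ '' Λ ⊆ S)
    (hT : WqBddOn p hp1.le Γ Λ)
    (hM : ExistsWqCocycleFinProperOn p hp1.le Δ S) :
    (φ '' Λ).Finite :=
  FFFLp_rigidity_of_quasimorphism_general p hp1 Γ Λ Δ S φ hqm hφ hT hM
end

section
/- Let 1 < p < ∞, let Γ₂ be a countable group, let Γ₁ ≤ Γ₂ be a subgroup of finite index, let A₂ ⊆ Γ₂ and A₁ ⊆ Γ₁ ∩ A₂. If every L^p-cocycle (π, b) on Γ₂ has b bounded on A₂, then every L^p-cocycle (π, b) on Γ₁ has b bounded on A₁. -/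
open MeasureTheory Set
open scoped Pointwise ENNReal

/-!
Induce the representation and the cocycle from `Γ₁` to `Γ₂`. With a transversal `σ` of
`Γ₂ ⧸ Γ₁` normalised by `σ Γ₁ = 1` and the Schreier cocycle `c g q = σ (g q)⁻¹ g σ q ∈ Γ₁`,
`Γ₂` acts on `ℓ^p(Γ₂ ⧸ Γ₁; L^p(Y))` by `(g f) q = π (c g (g⁻¹ q)) (f (g⁻¹ q))`, and
`B g q = b (c g (g⁻¹ q))` is a cocycle for it. As the index is finite, this space is
`L^p((Γ₂ ⧸ Γ₁) × Y)` for counting measure on the cosets, so `B` is bounded on `A₂` by hypothesis.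
For `γ ∈ Γ₁` the coordinate of `B γ` at the trivial coset is `b γ`, whence `‖b γ‖ ≤ ‖B γ‖`.
-/

def IsCocycle {G 𝕜 E : Type*} [Monoid G] [Semiring 𝕜] [SeminormedAddCommGroup E] [Module 𝕜 E]
    (π : G →* (E ≃ₗᵢ[𝕜] E)) (b : G → E) : Prop :=
  ∀ g h, b (g * h) = b g + π g (b h)

namespace MeasureTheory

variable {Q Y E : Type*} [MeasurableSpace Q] [MeasurableSpace Y] {μ : Measure Y} [SFinite μ]
  [NormedAddCommGroup E]

theorem ae_count_prod_of_forall [Countable Q] {α : Type*} {f g : Q × Y → α}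
    (h : ∀ q, (fun y => f (q, y)) =ᵐ[μ] fun y => g (q, y)) :
    f =ᵐ[Measure.count.prod μ] g := by
  refine measure_mono_null (t := ⋃ q, {q} ×ˢ {y | f (q, y) ≠ g (q, y)}) ?_
    (measure_iUnion_null fun q => ?_)
  · rintro ⟨q, y⟩ hqy
    exact mem_iUnion.2 ⟨q, rfl, hqy⟩
  · rw [Measure.prod_prod, ae_iff.1 (h q), mul_zero]

theorem stronglyMeasurable_of_prodMk_left [Countable Q] [MeasurableSingletonClass Q]
    {f : Q × Y → E} (h : ∀ q, StronglyMeasurable fun y => f (q, y)) : StronglyMeasurable f := by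
  borelize E
  refine stronglyMeasurable_iff_measurable_separable.2
    ⟨measurable_from_prod_countable_right fun q => (h q).measurable, ?_⟩
  refine (TopologicalSpace.IsSeparable.iUnion fun q => (h q).isSeparable_range).mono ?_
  rintro _ ⟨⟨q, y⟩, rfl⟩
  exact mem_iUnion.2 ⟨q, y, rfl⟩

variable [Fintype Q] [MeasurableSingletonClass Q]

theorem lintegral_count_prod {f : Q × Y → ℝ≥0∞} (hf : Measurable f) :
    ∫⁻ z, f z ∂Measure.count.prod μ = ∑ q, ∫⁻ y, f (q, y) ∂μ := by
  rw [lintegral_prod _ hf.aemeasurable, lintegral_count, tsum_fintype]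

variable {p : ℝ≥0∞}

theorem eLpNorm_count_prod_rpow (hp0 : p ≠ 0) (hpt : p ≠ ∞) {f : Q × Y → E}
    (hf : StronglyMeasurable f) :
    eLpNorm f p (Measure.count.prod μ) ^ p.toReal =
      ∑ q, eLpNorm (fun y => f (q, y)) p μ ^ p.toReal := by
  have hpr : 0 < p.toReal := ENNReal.toReal_pos hp0 hpt
  simp_rw [eLpNorm_eq_eLpNorm' hp0 hpt, ← lintegral_rpow_enorm_eq_rpow_eLpNorm' hpr]
  exact lintegral_count_prod (hf.enorm.pow_const _)

theorem MemLp.prodMk_left_of_count_prod (hp0 : p ≠ 0) (hpt : p ≠ ∞) {f : Q × Y → E}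
    (hf : MemLp f p (Measure.count.prod μ)) (hfm : StronglyMeasurable f) (q : Q) :
    MemLp (fun y => f (q, y)) p μ := by
  have hpr : 0 < p.toReal := ENNReal.toReal_pos hp0 hpt
  refine ⟨(hfm.comp_measurable measurable_prodMk_left).aestronglyMeasurable,
    (ENNReal.rpow_lt_top_iff_of_pos hpr).1 ?_⟩
  calc eLpNorm (fun y => f (q, y)) p μ ^ p.toReal
      ≤ ∑ q', eLpNorm (fun y => f (q', y)) p μ ^ p.toReal :=
        Finset.single_le_sum (f := fun q' => eLpNorm (fun y => f (q', y)) p μ ^ p.toReal)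
          (fun _ _ => zero_le) (Finset.mem_univ q)
    _ = eLpNorm f p (Measure.count.prod μ) ^ p.toReal := (eLpNorm_count_prod_rpow hp0 hpt hfm).symm
    _ < ∞ := ENNReal.rpow_lt_top_of_nonneg hpr.le hf.eLpNorm_ne_top

variable (p) [Fact (1 ≤ p)]

theorem memLp_count_prod_uncurry (hpt : p ≠ ∞) (f : PiLp p fun _ : Q => Lp E p μ) :
    MemLp (fun z : Q × Y => f z.1 z.2) p (Measure.count.prod μ) := by
  have hp0 : p ≠ 0 := (zero_lt_one.trans_le Fact.out).ne'
  have hpr : 0 < p.toReal := ENNReal.toReal_pos hp0 hpt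
  have hfm : StronglyMeasurable fun z : Q × Y => f z.1 z.2 :=
    stronglyMeasurable_of_prodMk_left fun q => Lp.stronglyMeasurable (f q)
  refine ⟨hfm.aestronglyMeasurable, (ENNReal.rpow_lt_top_iff_of_pos hpr).1 ?_⟩
  rw [eLpNorm_count_prod_rpow hp0 hpt hfm]
  exact ENNReal.sum_lt_top.2 fun q _ =>
    ENNReal.rpow_lt_top_of_nonneg hpr.le (Lp.eLpNorm_ne_top (f q))

theorem norm_toLp_count_prod_uncurry (hpt : p ≠ ∞) (f : PiLp p fun _ : Q => Lp E p μ) :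
    ‖(memLp_count_prod_uncurry p hpt f).toLp _‖ = ‖f‖ := by
  have hp0 : p ≠ 0 := (zero_lt_one.trans_le Fact.out).ne'
  have hpr : 0 < p.toReal := ENNReal.toReal_pos hp0 hpt
  rw [← Real.rpow_left_inj (norm_nonneg _) (norm_nonneg _) hpr.ne', Lp.norm_toLp,
    ENNReal.toReal_rpow, eLpNorm_count_prod_rpow hp0 hpt
      (stronglyMeasurable_of_prodMk_left fun q => Lp.stronglyMeasurable (f q)),
    ENNReal.toReal_sum fun q _ =>
      (ENNReal.rpow_lt_top_of_nonneg hpr.le (Lp.eLpNorm_ne_top (f q))).ne,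
    PiLp.norm_eq_sum hpr, ← Real.rpow_mul (by positivity), one_div, inv_mul_cancel₀ hpr.ne',
    Real.rpow_one]
  exact Finset.sum_congr rfl fun q _ => by rw [Lp.norm_def, ENNReal.toReal_rpow]

variable {𝕜 : Type*} [NormedField 𝕜] [NormedSpace 𝕜 E]

noncomputable def Lp.ofPiLpCountProd (hpt : p ≠ ∞) :
    (PiLp p fun _ : Q => Lp E p μ) →ₗᵢ[𝕜] Lp E p ((Measure.count : Measure Q).prod μ) where
  toFun f := (memLp_count_prod_uncurry p hpt f).toLp _
  map_add' f g := by
    rw [← MemLp.toLp_add]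
    exact MemLp.toLp_congr _ _ (ae_count_prod_of_forall fun q => Lp.coeFn_add (f q) (g q))
  map_smul' c f := by
    rw [RingHom.id_apply, ← MemLp.toLp_const_smul]
    exact MemLp.toLp_congr _ _ (ae_count_prod_of_forall fun q => Lp.coeFn_smul c (f q))
  norm_map' := norm_toLp_count_prod_uncurry p hpt

theorem Lp.ofPiLpCountProd_surjective (hpt : p ≠ ∞) :
    Function.Surjective
      (ofPiLpCountProd p hpt : (PiLp p fun _ : Q => Lp E p μ) →ₗᵢ[𝕜] _) := by
  intro F
  have hp0 : p ≠ 0 := (zero_lt_one.trans_le Fact.out).ne'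
  have hslice := (Lp.memLp F).prodMk_left_of_count_prod hp0 hpt (Lp.stronglyMeasurable F)
  refine ⟨WithLp.toLp p fun q => (hslice q).toLp _, ?_⟩
  exact (MemLp.toLp_congr (memLp_count_prod_uncurry p hpt _) (Lp.memLp F)
    (ae_count_prod_of_forall fun q => (hslice q).coeFn_toLp)).trans (Lp.toLp_coeFn F _)

noncomputable def Lp.piLpEquivCountProd (hpt : p ≠ ∞) :
    (PiLp p fun _ : Q => Lp E p μ) ≃ₗᵢ[𝕜] Lp E p ((Measure.count : Measure Q).prod μ) :=
  .ofSurjective _ (Lp.ofPiLpCountProd_surjective p hpt)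

end MeasureTheory

namespace Subgroup

variable {G : Type*} [Group G] (H : Subgroup G)

-- Representing the trivial coset by `1` is what makes `cosetCocycle_one_coset` hold.
open Classical in
noncomputable def normalizedSection (q : G ⧸ H) : G :=
  if q = ((1 : G) : G ⧸ H) then 1 else q.out

theorem mk_normalizedSection (q : G ⧸ H) : (H.normalizedSection q : G ⧸ H) = q := by
  unfold normalizedSection
  split_ifs with hq
  · exact hq.symm
  · exact QuotientGroup.out_eq' q

theorem normalizedSection_one : H.normalizedSection ((1 : G) : G ⧸ H) = 1 := if_pos rfl

noncomputable def cosetCocycle (g : G) (q : G ⧸ H) : H :=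
  ⟨(H.normalizedSection (g • q))⁻¹ * (g * H.normalizedSection q), QuotientGroup.eq.mp <| by
    rw [mk_normalizedSection, ← smul_eq_mul, ← MulAction.Quotient.smul_mk, mk_normalizedSection]⟩

theorem cosetCocycle_mul (g₁ g₂ : G) (q : G ⧸ H) :
    H.cosetCocycle (g₁ * g₂) q = H.cosetCocycle g₁ (g₂ • q) * H.cosetCocycle g₂ q := by
  ext
  simp only [cosetCocycle, coe_mul, mul_smul]
  group

theorem smul_one_coset_of_mem {g : G} (hg : g ∈ H) : g • ((1 : G) : G ⧸ H) = ((1 : G) : G ⧸ H) :=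
  MulAction.mem_stabilizer_iff.mp (by rwa [MulAction.stabilizer_quotient])

theorem cosetCocycle_one_coset (h : H) : H.cosetCocycle h ((1 : G) : G ⧸ H) = h := by
  ext
  simp only [cosetCocycle, H.smul_one_coset_of_mem h.2, normalizedSection_one, inv_one, one_mul,
    mul_one]

variable (p : ℝ≥0∞) [Fact (1 ≤ p)] {𝕜 E : Type*} [Semiring 𝕜] [SeminormedAddCommGroup E]
  [Module 𝕜 E] [Fintype (G ⧸ H)]

noncomputable def inducedRep (π : H →* (E ≃ₗᵢ[𝕜] E)) :
    G →* ((PiLp p fun _ : G ⧸ H => E) ≃ₗᵢ[𝕜] PiLp p fun _ : G ⧸ H => E) :=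
  MonoidHom.mk'
    (fun g => (LinearIsometryEquiv.piLpCongrRight p fun q => π (H.cosetCocycle g q)).trans
      (LinearIsometryEquiv.piLpCongrLeft p 𝕜 E (MulAction.toPerm g)))
    fun g₁ g₂ => by
      ext f q
      show π (H.cosetCocycle (g₁ * g₂) ((g₁ * g₂)⁻¹ • q)) (f ((g₁ * g₂)⁻¹ • q)) =
        π (H.cosetCocycle g₁ (g₁⁻¹ • q))
          (π (H.cosetCocycle g₂ (g₂⁻¹ • g₁⁻¹ • q)) (f (g₂⁻¹ • g₁⁻¹ • q)))
      rw [mul_inv_rev, mul_smul, cosetCocycle_mul, smul_inv_smul, map_mul]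
      rfl

theorem inducedRep_apply (π : H →* (E ≃ₗᵢ[𝕜] E)) (g : G) (f : PiLp p fun _ : G ⧸ H => E)
    (q : G ⧸ H) : H.inducedRep p π g f q = π (H.cosetCocycle g (g⁻¹ • q)) (f (g⁻¹ • q)) :=
  rfl

noncomputable def inducedCocycle (b : H → E) (g : G) : PiLp p fun _ : G ⧸ H => E :=
  WithLp.toLp p fun q => b (H.cosetCocycle g (g⁻¹ • q))

theorem norm_le_norm_inducedCocycle (b : H → E) (h : H) : ‖b h‖ ≤ ‖H.inducedCocycle p b h‖ := by
  have hb : H.inducedCocycle p b h ((1 : G) : G ⧸ H) = b h := by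
    rw [inducedCocycle, PiLp.toLp_apply, H.smul_one_coset_of_mem (H.inv_mem h.2),
      cosetCocycle_one_coset]
  exact hb ▸ PiLp.norm_apply_le _ _

end Subgroup

theorem IsCocycle.induced {G 𝕜 E : Type*} [Group G] {H : Subgroup G} [Fintype (G ⧸ H)]
    [Semiring 𝕜] [SeminormedAddCommGroup E] [Module 𝕜 E] {π : H →* (E ≃ₗᵢ[𝕜] E)} {b : H → E}
    (hb : IsCocycle π b) (p : ℝ≥0∞) [Fact (1 ≤ p)] :
    IsCocycle (H.inducedRep p π) (H.inducedCocycle p b) := by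
  intro g₁ g₂
  ext q
  rw [PiLp.add_apply, Subgroup.inducedRep_apply]
  simp only [Subgroup.inducedCocycle, PiLp.toLp_apply]
  rw [mul_inv_rev, mul_smul, Subgroup.cosetCocycle_mul, smul_inv_smul, hb]

namespace LinearIsometryEquiv

variable {𝕜 E F : Type*} [Semiring 𝕜] [SeminormedAddCommGroup E] [SeminormedAddCommGroup F]
  [Module 𝕜 E] [Module 𝕜 F]

def conj (e : E ≃ₗᵢ[𝕜] F) : (E ≃ₗᵢ[𝕜] E) →* (F ≃ₗᵢ[𝕜] F) where
  toFun u := (e.symm.trans u).trans e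
  map_one' := by ext; simp
  map_mul' u v := by ext; simp

end LinearIsometryEquiv

theorem IsCocycle.conj {G 𝕜 E F : Type*} [Monoid G] [Semiring 𝕜] [SeminormedAddCommGroup E]
    [SeminormedAddCommGroup F] [Module 𝕜 E] [Module 𝕜 F] {π : G →* (E ≃ₗᵢ[𝕜] E)} {b : G → E}
    (hb : IsCocycle π b) (e : E ≃ₗᵢ[𝕜] F) : IsCocycle (e.conj.comp π) (e ∘ b) := fun g h => by
  simp [LinearIsometryEquiv.conj, hb g h]

theorem relative_FLp_of_finiteIndex_general
    (p : ℝ≥0∞) (hp1 : 1 < p) (hp2 : p < ⊤)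
    (Γ₂ : Type) [Group Γ₂] (Γ₁ : Subgroup Γ₂) (hfi : Γ₁.FiniteIndex)
    (A₂ A₁ : Set Γ₂) (hA₁ : A₁ ⊆ ↑Γ₁ ∩ A₂)
    (h : BddLpCocyclesOn p hp1.le Γ₂ A₂) :
    BddLpCocyclesOn p hp1.le ↥Γ₁ {x : ↥Γ₁ | (x : Γ₂) ∈ A₁} := by
  have : Fact (1 ≤ p) := ⟨hp1.le⟩
  intro Y _ _ μ _ π b (hb : IsCocycle π b)
  let _ : Fintype (Γ₂ ⧸ Γ₁) := Γ₁.fintypeQuotientOfFiniteIndex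
  let _ : MeasurableSpace (Γ₂ ⧸ Γ₁) := ⊤
  let e := Lp.piLpEquivCountProd (Q := Γ₂ ⧸ Γ₁) (μ := μ) (E := ℝ) (𝕜 := ℝ) p hp2.ne
  obtain ⟨C, hC⟩ := h _ _ _ _ ((hb.induced p).conj e)
  exact ⟨C, fun x hx => (Γ₁.norm_le_norm_inducedCocycle p b x).trans
    ((e.norm_map _).symm.trans_le (hC _ (hA₁ hx).2))⟩

/-- Relative Property (FL^p) passes to finite-index subgroups:
if every `L^p`-cocycle on `Γ₂` is bounded on `A₂` and `Γ₁ ≤ Γ₂` has finite index,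
then every `L^p`-cocycle on `Γ₁` is bounded on `A₁ ⊆ Γ₁ ∩ A₂`. -/
theorem relative_FLp_of_finiteIndex
    (p : ℝ≥0∞) (hp1 : 1 < p) (hp2 : p < ⊤)
    (Γ₂ : Type) [Group Γ₂] [Countable Γ₂] (Γ₁ : Subgroup Γ₂) (hfi : Γ₁.FiniteIndex)
    (A₂ A₁ : Set Γ₂) (hA₁ : A₁ ⊆ ↑Γ₁ ∩ A₂)
    (h : BddLpCocyclesOn p hp1.le Γ₂ A₂) :
    BddLpCocyclesOn p hp1.le ↥Γ₁ {x : ↥Γ₁ | (x : Γ₂) ∈ A₁} :=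
  relative_FLp_of_finiteIndex_general p hp1 hp2 Γ₂ Γ₁ hfi A₂ A₁ hA₁ h
end

section
/- Let 1 < p < ∞, let G be an lcsc group, and let Λ ⊆ G be a relatively dense approximate subgroup of G, with Λ^∞ the subgroup of G generated by Λ. If every L^p-cocycle (π, b) on the abstract group Λ^∞ has b bounded on Λ, then every continuous L^p-cocycle on G is bounded, i.e. G has Property (FL^p). -/
open MeasureTheory Set
open scoped Pointwise ENNReal

/-!
Restricted to `Λ^∞`, a continuous cocycle `b` on `G` is bounded on `Λ` by hypothesis, and by
continuity it is bounded on the compact set `K` with `Λ K = G`. Since `π` acts by isometries,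
`‖b (x k)‖ ≤ ‖b x‖ + ‖b k‖`, so `b` is bounded on `Λ K = G`.
-/

section Cocycle

variable {G E : Type*} [Group G] [NormedAddCommGroup E] [NormedSpace ℝ E]
  {π : G → (E ≃ₗᵢ[ℝ] E)} {b : G → E}

theorem norm_cocycle_mul_le (hb : ∀ g h, b (g * h) = b g + π g (b h)) (g h : G) :
    ‖b (g * h)‖ ≤ ‖b g‖ + ‖b h‖ :=
  calc ‖b (g * h)‖ = ‖b g + π g (b h)‖ := by rw [hb]
    _ ≤ ‖b g‖ + ‖π g (b h)‖ := norm_add_le _ _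
    _ = ‖b g‖ + ‖b h‖ := by rw [(π g).norm_map]

theorem norm_cocycle_le_of_mem_mul (hb : ∀ g h, b (g * h) = b g + π g (b h))
    {A B : Set G} {C₁ C₂ : ℝ} (hA : ∀ x ∈ A, ‖b x‖ ≤ C₁) (hB : ∀ x ∈ B, ‖b x‖ ≤ C₂)
    {g : G} (hg : g ∈ A * B) : ‖b g‖ ≤ C₁ + C₂ := by
  obtain ⟨x, hx, y, hy, rfl⟩ := hg
  exact (norm_cocycle_mul_le hb x y).trans (add_le_add (hA x hx) (hB y hy))

end Cocycle

theorem FLp_of_relativelyDense_approximate_subgroup_general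
    (p : ℝ≥0∞) (hp1 : 1 < p)
    (G : Type) [Group G] [TopologicalSpace G]
    (Λ : Set G)
    (hΛrd : RelativelyDense Λ)
    (h : BddLpCocyclesOn p hp1.le ↥(Subgroup.closure Λ)
      {x : ↥(Subgroup.closure Λ) | (x : G) ∈ Λ}) :
    HasFLp p hp1.le G := by
  have : Fact (1 ≤ p) := ⟨hp1.le⟩
  intro Y _ _ μ _ π b hb hb_cont _
  obtain ⟨C₁, hbΛ⟩ := h Y μ (π.comp (Subgroup.closure Λ).subtype) (fun x => b x)
    fun g g' => hb g g'
  obtain ⟨K, hK, hΛK⟩ := hΛrd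
  obtain ⟨C₂, hbK⟩ := hK.exists_bound_of_continuousOn hb_cont.continuousOn
  refine ⟨C₁ + C₂, fun g => norm_cocycle_le_of_mem_mul hb
    (fun x hx => hbΛ ⟨x, Subgroup.subset_closure hx⟩ hx) hbK ?_⟩
  rw [hΛK]
  exact mem_univ g

/-- If `Λ` is a relatively dense approximate subgroup of an lcsc group
`G` and every `L^p`-cocycle on the abstract group `Λ^∞` is bounded on `Λ`, then `G` has
Property (FL^p). -/
theorem FLp_of_relativelyDense_approximate_subgroup
    (p : ℝ≥0∞) (hp1 : 1 < p) (hp2 : p < ⊤)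
    (G : Type) [Group G] [TopologicalSpace G] [IsTopologicalGroup G] [T2Space G]
    [LocallyCompactSpace G] [SecondCountableTopology G]
    (Λ : Set G) (hΛsym : Λ⁻¹ = Λ) (hΛ1 : (1 : G) ∈ Λ)
    (hΛap : ∃ F : Set G, F.Finite ∧ Λ * Λ ⊆ Λ * F)
    (hΛrd : RelativelyDense Λ)
    (h : BddLpCocyclesOn p hp1.le ↥(Subgroup.closure Λ)
      {x : ↥(Subgroup.closure Λ) | (x : G) ∈ Λ}) :
    HasFLp p hp1.le G :=
  FLp_of_relativelyDense_approximate_subgroup_general p hp1 G Λ hΛrd h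
end

section
/- Let (G, H, Γ) be a uniform cut-and-project scheme and W ⊆ H a compact set. Let Y = (G × H)/Γ with the (G × H)-invariant Borel probability measure m_Y, and let s = (s_G, s_H) : Y → G × H be a Borel section of the quotient map (s(x)Γ = x for all x) with precompact image. For γ = (γ₁, γ₂) ∈ Γ and x, y ∈ Y put g^γ_{x,y} := s_G(x) · γ₁ · s_G(y)⁻¹ ∈ G. Then for every conull Borel set Ω ⊆ G × Y and every nonnegative φ ∈ L¹(Y, m_Y) there exists a constant C > 0 such that for every γ = (γ₁, γ₂) ∈ Γ with γ₂ ∈ W there exist x, y ∈ Y with (g^γ_{x,y}, x) ∈ Ω, φ(x) ≤ C, and φ((g^γ_{x,y}, 1_H)⁻¹·x) ≤ C. -/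
open MeasureTheory Set
open scoped Pointwise ENNReal

/-!
Summing the lift `s_* m_Y` over all right translates by `Γ` gives a left-invariant measure on
`G × H`, finite on compacts since `Γ` is discrete and `range s` is precompact; hence it is a
positive multiple of Haar measure. So `s_* m_Y` has bounded density with respect to Haar measure,
and conversely the image in `Y` of Haar measure restricted to a compact set has bounded density
with respect to `m_Y`.

Choose `x, y` independently with law `m_Y`. For fixed `x`, the law of `g = s_G(x) γ₁ s_G(y)⁻¹`
is absolutely continuous with respect to Haar measure, so `(g, x) ∈ Ω` almost surely. The point
`(g, 1)⁻¹ • x` equals `[(s_G(y), s_H(x) γ₂)]`, whose law is bounded by a constant times `m_Y`: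
the constant involves the modular function of `H` only at `γ₂ ∈ W`, so it is uniform in `γ`.
Since `φ` is finite, its superlevel sets have small measure, so for `C` large the three bad
events have total probability `< 1`.
-/

open Filter
open scoped NNReal Topology

instance QuotientGroup.measurableConstSMul {X : Type*} [Group X] [MeasurableSpace X]
    [MeasurableMul X] {Γ : Subgroup X} : MeasurableConstSMul X (X ⧸ Γ) where
  measurable_const_smul g :=
    measurable_from_quotient.mpr (QuotientGroup.measurable_coe.comp (measurable_const_mul g))

theorem Subgroup.finite_preimage_coe_of_isCompact {X : Type*} [Group X] [TopologicalSpace X]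
    [IsTopologicalGroup X] [T2Space X] {Γ : Subgroup X} [DiscreteTopology Γ] {C : Set X}
    (hC : IsCompact C) : ((↑) ⁻¹' C : Set Γ).Finite :=
  (Subgroup.isClosed_of_discrete.isClosedEmbedding_subtypeVal.isCompact_preimage
    hC).finite_of_discrete

theorem tsum_mul_coe_mul_eq {X M : Type*} [Group X] [AddCommMonoid M] [TopologicalSpace M]
    {Γ : Subgroup X} (f : X → M) (z : X) (δ : Γ) :
    ∑' γ : Γ, f (z * δ * γ) = ∑' γ : Γ, f (z * γ) := by
  simpa [mul_assoc] using (Equiv.mulLeft δ).tsum_eq fun γ : Γ => f (z * γ)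

section Unfolding

variable {X : Type*} [Group X] [MeasurableSpace X] {Γ : Subgroup X}

noncomputable def unfoldedMeasure (Γ : Subgroup X) (mY : Measure (X ⧸ Γ)) (s : X ⧸ Γ → X) :
    Measure X :=
  Measure.sum fun γ : Γ => mY.map fun x => s x * γ

variable {mY : Measure (X ⧸ Γ)} {s : X ⧸ Γ → X}

theorem map_le_unfoldedMeasure : mY.map s ≤ unfoldedMeasure Γ mY s := by
  simpa [unfoldedMeasure] using Measure.le_sum (fun γ : Γ => mY.map fun x => s x * γ) 1

variable [MeasurableMul X]

theorem unfoldedMeasure_apply (hsm : Measurable s) {A : Set X} (hA : MeasurableSet A) :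
    unfoldedMeasure Γ mY s A = ∑' γ : Γ, mY ((fun x => s x * γ) ⁻¹' A) := by
  rw [unfoldedMeasure, Measure.sum_apply _ hA]
  exact tsum_congr fun γ => Measure.map_apply (hsm.mul_const _) hA

theorem unfoldedMeasure_apply_eq_lintegral [Countable Γ] (hsm : Measurable s) {A : Set X}
    (hA : MeasurableSet A) :
    unfoldedMeasure Γ mY s A = ∫⁻ x, ∑' γ : Γ, A.indicator 1 (s x * γ) ∂mY := by
  rw [lintegral_tsum (f := fun (γ : Γ) x => A.indicator 1 (s x * γ))
    fun γ => ((measurable_one.indicator hA).comp (hsm.mul_const _)).aemeasurable,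
    unfoldedMeasure_apply hsm hA]
  exact tsum_congr fun γ => (lintegral_indicator_one ((hsm.mul_const _) hA)).symm

theorem isMulLeftInvariant_unfoldedMeasure [Countable Γ] [SMulInvariantMeasure X (X ⧸ Γ) mY]
    (hs : ∀ x, (s x : X ⧸ Γ) = x) (hsm : Measurable s) :
    (unfoldedMeasure Γ mY s).IsMulLeftInvariant := by
  refine ⟨fun g => Measure.ext fun A hA => ?_⟩
  -- `g * s x` and `s (g • x)` differ by an element of `Γ`, which the sum over `Γ` absorbs.
  have hcount : ∀ x, ∑' γ : Γ, ((g * ·) ⁻¹' A).indicator (1 : X → ℝ≥0∞) (s x * γ)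
      = ∑' γ : Γ, A.indicator 1 (s (g • x) * γ) := by
    intro x
    have hgx : ((g * s x : X) : X ⧸ Γ) = g • x := by
      conv_rhs => rw [← hs x]
      rfl
    have hδ : (s (g • x))⁻¹ * (g * s x) ∈ Γ := QuotientGroup.eq.mp ((hs _).trans hgx.symm)
    calc ∑' γ : Γ, ((g * ·) ⁻¹' A).indicator 1 (s x * γ)
        = ∑' γ : Γ, A.indicator 1 (s (g • x) * (⟨_, hδ⟩ : Γ) * γ) :=
          tsum_congr fun γ => by rw [Subgroup.coe_mk, mul_inv_cancel_left, mul_assoc]; rfl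
      _ = ∑' γ : Γ, A.indicator 1 (s (g • x) * γ) := tsum_mul_coe_mul_eq _ _ _
  have hcount_meas : Measurable fun x => ∑' γ : Γ, A.indicator (1 : X → ℝ≥0∞) (s x * γ) :=
    .tsum fun γ => (measurable_one.indicator hA).comp (hsm.mul_const _)
  rw [Measure.map_apply (measurable_const_mul g) hA,
    unfoldedMeasure_apply_eq_lintegral hsm (measurable_const_mul g hA), lintegral_congr hcount,
    unfoldedMeasure_apply_eq_lintegral hsm hA]
  exact (measurePreserving_smul g mY).lintegral_comp hcount_meas

variable [TopologicalSpace X] [IsTopologicalGroup X] [T2Space X] [BorelSpace X]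
  [DiscreteTopology Γ] (hs : ∀ x, (s x : X ⧸ Γ) = x) (hsm : Measurable s) {K : Set X}
  (hK : IsCompact K) (hsK : range s ⊆ K)
include hs hsm hK hsK

theorem exists_unfoldedMeasure_inter_le {D : Set X} (hD : IsCompact D) :
    ∃ n : ℕ, ∀ Z : Set (X ⧸ Γ), MeasurableSet Z →
      unfoldedMeasure Γ mY s ((↑) ⁻¹' Z ∩ D) ≤ n * mY Z := by
  set F := (Subgroup.finite_preimage_coe_of_isCompact (Γ := Γ) (hK.inv.mul hD)).toFinset
  refine ⟨F.card, fun Z hZ => ?_⟩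
  have hslice : ∀ γ : Γ, (fun x => s x * γ) ⁻¹' ((↑) ⁻¹' Z ∩ D) = Z ∩ {x | s x * γ ∈ D} := by
    intro γ
    ext x
    simp [QuotientGroup.mk_mul_of_mem (s x) γ.2, hs x]
  have hvanish : ∀ γ ∉ F, Z ∩ {x | s x * γ ∈ D} = ∅ := by
    refine fun γ hγ => eq_empty_of_forall_notMem fun x hx => hγ ?_
    have hxD : s x * γ ∈ D := hx.2
    simpa [F] using mul_mem_mul (inv_mem_inv.mpr (hsK (mem_range_self x))) hxD
  rw [unfoldedMeasure_apply hsm (QuotientGroup.measurable_coe hZ |>.inter hD.measurableSet),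
    tsum_eq_sum (s := F) fun γ hγ => by rw [hslice, hvanish γ hγ, measure_empty], ← nsmul_eq_mul]
  exact Finset.sum_le_card_nsmul _ _ _ fun γ _ => measure_mono (hslice γ ▸ inter_subset_left)

theorem isFiniteMeasureOnCompacts_unfoldedMeasure [IsFiniteMeasure mY] :
    IsFiniteMeasureOnCompacts (unfoldedMeasure Γ mY s) := by
  refine ⟨fun D hD => ?_⟩
  obtain ⟨n, hn⟩ := exists_unfoldedMeasure_inter_le (mY := mY) hs hsm hK hsK hD
  simpa using (hn univ .univ).trans_lt (by finiteness)

variable [LocallyCompactSpace X] [SecondCountableTopology X] [Countable Γ] [IsFiniteMeasure mY]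
  [SMulInvariantMeasure X (X ⧸ Γ) mY] (μ : Measure X) [μ.IsHaarMeasure]

theorem exists_unfoldedMeasure_eq_smul_haar : ∃ c : ℝ≥0, unfoldedMeasure Γ mY s = c • μ :=
  have := isFiniteMeasureOnCompacts_unfoldedMeasure (mY := mY) hs hsm hK hsK
  have := isMulLeftInvariant_unfoldedMeasure (mY := mY) hs hsm
  ⟨_, Measure.isMulLeftInvariant_eq_smul _ _⟩

theorem exists_map_section_le_smul_haar : ∃ c : ℝ≥0, mY.map s ≤ c • μ :=
  have ⟨c, hc⟩ := exists_unfoldedMeasure_eq_smul_haar (mY := mY) hs hsm hK hsK μ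
  ⟨c, hc ▸ map_le_unfoldedMeasure⟩

theorem exists_map_mk_restrict_le_smul [NeZero mY] {D : Set X} (hD : IsCompact D) :
    ∃ c : ℝ≥0, (μ.restrict D).map (↑) ≤ c • mY := by
  obtain ⟨c, hunf⟩ := exists_unfoldedMeasure_eq_smul_haar (mY := mY) hs hsm hK hsK μ
  have hc : c ≠ 0 := by
    rintro hc
    have hle := Measure.le_iff'.mp (map_le_unfoldedMeasure (mY := mY) (s := s)) univ
    rw [hunf, hc, zero_smul, Measure.map_apply hsm .univ, preimage_univ] at hle
    exact NeZero.ne mY (Measure.measure_univ_eq_zero.mp (nonpos_iff_eq_zero.mp hle))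
  obtain ⟨n, hn⟩ := exists_unfoldedMeasure_inter_le (mY := mY) hs hsm hK hsK hD
  refine ⟨c⁻¹ * n, Measure.le_iff.mpr fun Z hZ => ?_⟩
  have hcZ := hn Z hZ
  rw [hunf, Measure.coe_nnreal_smul_apply, ENNReal.mul_le_iff_le_inv (by simpa) (by simp)] at hcZ
  rw [Measure.map_apply QuotientGroup.measurable_coe hZ, Measure.coe_nnreal_smul_apply,
    Measure.restrict_apply (QuotientGroup.measurable_coe hZ)]
  simpa [ENNReal.coe_inv hc, mul_assoc] using hcZ

end Unfolding

namespace MeasureTheory.Measure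

theorem exists_map_mul_right_restrict_le_smul {H : Type*} [Group H] [TopologicalSpace H]
    [IsTopologicalGroup H] [LocallyCompactSpace H] [MeasurableSpace H] [BorelSpace H]
    (μ : Measure H) [μ.IsHaarMeasure] [μ.InnerRegular] {W : Set H} (hW : IsCompact W) :
    ∃ c : ℝ≥0∞, c ≠ ∞ ∧
      ∀ w ∈ W, ∀ K : Set H, (μ.restrict K).map (· * w) ≤ c • μ.restrict (K * W) := by
  obtain ⟨V, hVc, hV1⟩ := exists_compact_mem_nhds (1 : H)
  have hVpos : μ V ≠ 0 := (μ.measure_pos_of_mem_nhds hV1).ne'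
  refine ⟨μ (V * W⁻¹) / μ V, ENNReal.div_ne_top (hVc.mul hW.inv).measure_ne_top hVpos,
    fun w hw K => ?_⟩
  have hmod := map_right_mul_eq_modularCharacterFun_smul μ w
  -- the modular character at `w` is `μ (V * w⁻¹) / μ V`
  have hmod_le : (modularCharacterFun w : ℝ≥0∞) ≤ μ (V * W⁻¹) / μ V := by
    rw [ENNReal.le_div_iff_mul_le (.inl hVpos) (.inl hVc.measure_ne_top)]
    calc (modularCharacterFun w : ℝ≥0∞) * μ V = μ.map (· * w) V := by
          rw [hmod, coe_nnreal_smul_apply]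
      _ = μ ((· * w) ⁻¹' V) := (measurableEmbedding_mulRight w).map_apply μ V
      _ ≤ μ (V * W⁻¹) := measure_mono fun h hh => by
          simpa using mul_mem_mul (show h * w ∈ V from hh) (inv_mem_inv.mpr hw)
  have hKW : K ⊆ (· * w) ⁻¹' (K * W) := fun k hk => mul_mem_mul hk hw
  calc (μ.restrict K).map (· * w) ≤ (μ.restrict ((· * w) ⁻¹' (K * W))).map (· * w) :=
        map_mono (restrict_mono hKW le_rfl) (measurable_mul_const w)
    _ = (modularCharacterFun w : ℝ≥0∞) • μ.restrict (K * W) := by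
        rw [← (measurableEmbedding_mulRight w).restrict_map, hmod, ENNReal.smul_def,
          restrict_smul]
    _ ≤ (μ (V * W⁻¹) / μ V) • μ.restrict (K * W) := by gcongr

variable {α β : Type*} [MeasurableSpace α] [MeasurableSpace β] {μ : Measure α} {ν : Measure β}
  [SFinite μ] [SFinite ν] {ρ : Measure (α × β)} {c : ℝ≥0∞} {A : Set α} {B : Set β}

theorem map_fst_le_smul_restrict (h : ρ ≤ c • μ.prod ν) (hAB : ∀ᵐ p ∂ρ, p ∈ A ×ˢ B) :
    ρ.map Prod.fst ≤ (c * ν B) • μ.restrict A :=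
  calc ρ.map Prod.fst = (ρ.restrict (A ×ˢ B)).map Prod.fst := by
        rw [restrict_eq_self_of_ae_mem hAB]
    _ ≤ ((c • μ.prod ν).restrict (A ×ˢ B)).map Prod.fst :=
        map_mono (restrict_mono subset_rfl h) measurable_fst
    _ = (c * ν B) • μ.restrict A := by
        rw [restrict_smul, ← prod_restrict, Measure.map_smul,
          map_fst_prod, restrict_apply_univ, smul_smul]

theorem map_snd_le_smul_restrict (h : ρ ≤ c • μ.prod ν) (hAB : ∀ᵐ p ∂ρ, p ∈ A ×ˢ B) :
    ρ.map Prod.snd ≤ (c * μ A) • ν.restrict B :=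
  calc ρ.map Prod.snd = (ρ.restrict (A ×ˢ B)).map Prod.snd := by
        rw [restrict_eq_self_of_ae_mem hAB]
    _ ≤ ((c • μ.prod ν).restrict (A ×ˢ B)).map Prod.snd :=
        map_mono (restrict_mono subset_rfl h) measurable_snd
    _ = (c * μ A) • ν.restrict B := by
        rw [restrict_smul, ← prod_restrict, Measure.map_smul,
          map_snd_prod, restrict_apply_univ, smul_smul]

theorem map_prod_self_swap {Y α β : Type*} [MeasurableSpace Y]
    [MeasurableSpace α] [MeasurableSpace β] (μ : Measure Y) [SFinite μ] {f : Y → α} {g : Y → β}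
    (hf : Measurable f) (hg : Measurable g) :
    (μ.prod μ).map (fun p => (f p.2, g p.1)) = (μ.map f).prod (μ.map g) := by
  rw [map_prod_map _ _ hf hg, ← prod_swap (μ := μ) (ν := μ),
    map_map (hf.prodMap hg) measurable_swap, prod_swap]
  rfl

end MeasureTheory.Measure

theorem exists_pos_measure_setOf_lt_lt {α : Type*} [MeasurableSpace α] {μ : Measure α}
    [IsFiniteMeasure μ] {f : α → ℝ} (hf : AEMeasurable f μ) {ε : ℝ≥0∞} (hε : 0 < ε) :
    ∃ C : ℝ, 0 < C ∧ μ {x | C < f x} < ε := by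
  have hlim : Tendsto (fun n : ℕ => μ {x | (n : ℝ) < f x}) atTop (𝓝 0) := by
    have h := tendsto_measure_iInter_atTop (μ := μ) (s := fun n : ℕ => {x | (n : ℝ) < f x})
      (fun n => nullMeasurableSet_lt aemeasurable_const hf)
      (fun m n hmn x (hx : (n : ℝ) < f x) => show (m : ℝ) < f x from
        (Nat.cast_le.mpr hmn).trans_lt hx) ⟨0, measure_ne_top _ _⟩
    rwa [iInter_eq_empty_iff.mpr fun x => ⟨⌈f x⌉₊, (Nat.le_ceil (f x)).not_gt⟩,
      measure_empty] at h
  obtain ⟨n, hn, hn1⟩ := ((hlim.eventually (gt_mem_nhds hε)).and (eventually_ge_atTop 1)).exists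
  exact ⟨n, by exact_mod_cast hn1, hn⟩

theorem exists_and_of_ae_of_measure_lt_one {α : Type*} [MeasurableSpace α] {μ : Measure α}
    [IsProbabilityMeasure μ] {P Q : α → Prop} (hP : ∀ᵐ x ∂μ, P x) (hQ : μ {x | ¬Q x} < 1) :
    ∃ x, P x ∧ Q x := by
  by_contra! h
  have hcover : univ ⊆ {x | ¬P x} ∪ {x | ¬Q x} := fun x _ => by
    by_cases hx : P x <;> simp [hx, h x]
  have h1 := (measure_mono (μ := μ) hcover).trans (measure_union_le _ _)
  rw [measure_univ, ae_iff.mp hP, zero_add] at h1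
  exact h1.not_gt hQ

theorem quasiMeasurePreserving_mul_inv_prod {Y Z G : Type*} [MeasurableSpace Y]
    [MeasurableSpace Z] [Group G] [MeasurableSpace G] [MeasurableMul₂ G] [MeasurableInv G]
    {ν : Measure Y} {ρ : Measure Z} {μ : Measure G} [SFinite ν] [SFinite ρ] [SFinite μ]
    [μ.IsMulLeftInvariant] {a : Y → G} {f : Z → G} (ha : Measurable a)
    (hf : Measure.QuasiMeasurePreserving f ρ μ) :
    Measure.QuasiMeasurePreserving (fun p : Y × Z => (a p.1 * (f p.2)⁻¹, p.1)) (ν.prod ρ)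
      (μ.prod ν) := by
  have hshear : MeasurePreserving (fun p : Y × G => (p.1, a p.1 * p.2)) (ν.prod μ) (ν.prod μ) :=
    (MeasurePreserving.id ν).skew_product (g := fun y g => a y * g)
      ((ha.comp measurable_fst).mul measurable_snd)
      (ae_of_all _ fun y => map_mul_left_eq_self μ (a y))
  exact Measure.measurePreserving_swap.quasiMeasurePreserving.comp
    (hshear.quasiMeasurePreserving.comp
      (QuasiMeasurePreserving.prodMap (.id ν) ((quasiMeasurePreserving_inv μ).comp hf)))

theorem inv_smul_eq_mk_of_section {G H : Type*} [Group G] [Group H] {Γ : Subgroup (G × H)}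
    {s : (G × H) ⧸ Γ → G × H} (hs : ∀ x, (s x : (G × H) ⧸ Γ) = x) (γ : Γ) (x y : (G × H) ⧸ Γ) :
    (((s x).1 * (γ : G × H).1 * ((s y).1)⁻¹, (1 : H)) : G × H)⁻¹ • x
      = (((s y).1, (s x).2 * (γ : G × H).2) : (G × H) ⧸ Γ) := by
  set b : G × H := ((s x).1 * (γ : G × H).1 * ((s y).1)⁻¹, 1)
  have hfac : (((s y).1, (s x).2 * (γ : G × H).2) : G × H) = b⁻¹ * s x * γ := by
    ext <;> simp [b, mul_assoc]
  rw [hfac, QuotientGroup.mk_mul_of_mem _ γ.2]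
  conv_lhs => rw [← hs x]
  rfl

section CutAndProject

variable {G H : Type*} [Group G] [TopologicalSpace G] [IsTopologicalGroup G] [T2Space G]
  [LocallyCompactSpace G] [SecondCountableTopology G] [MeasurableSpace G] [BorelSpace G]
  [Group H] [TopologicalSpace H] [IsTopologicalGroup H] [T2Space H]
  [LocallyCompactSpace H] [SecondCountableTopology H] [MeasurableSpace H] [BorelSpace H]
  {Γ : Subgroup (G × H)} [DiscreteTopology Γ] [Countable Γ] {mY : Measure ((G × H) ⧸ Γ)}
  [IsProbabilityMeasure mY] [SMulInvariantMeasure (G × H) ((G × H) ⧸ Γ) mY]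
  {s : (G × H) ⧸ Γ → G × H} (hs : ∀ x, (s x : (G × H) ⧸ Γ) = x) (hsm : Measurable s)
  (hsb : IsCompact (closure (range s)))
include hs hsm hsb

theorem exists_map_mk_section_mul_le_smul {W : Set H} (hW : IsCompact W) :
    ∃ c : ℝ≥0∞, c ≠ ∞ ∧ ∀ w ∈ W,
      (mY.prod mY).map (fun p => (((s p.2).1, (s p.1).2 * w) : (G × H) ⧸ Γ)) ≤ c • mY := by
  set μG : Measure G := Measure.haar
  set μH : Measure H := Measure.haar
  set K₁ := Prod.fst '' closure (range s)
  set K₂ := Prod.snd '' closure (range s)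
  have hK₁ : IsCompact K₁ := hsb.image continuous_fst
  have hK₂ : IsCompact K₂ := hsb.image continuous_snd
  have hsK : ∀ᵐ z ∂mY.map s, z ∈ K₁ ×ˢ K₂ :=
    (ae_map_iff hsm.aemeasurable (hK₁.prod hK₂).measurableSet).mpr <| ae_of_all _ fun x =>
      ⟨mem_image_of_mem _ (subset_closure (mem_range_self x)),
        mem_image_of_mem _ (subset_closure (mem_range_self x))⟩
  obtain ⟨a, ha⟩ :=
    exists_map_section_le_smul_haar (mY := mY) hs hsm hsb subset_closure (μG.prod μH)
  obtain ⟨b, hb, hμH⟩ := μH.exists_map_mul_right_restrict_le_smul hW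
  obtain ⟨n, hn⟩ := exists_map_mk_restrict_le_smul (mY := mY) hs hsm hsb subset_closure
    (μG.prod μH) (hK₁.prod (hK₂.mul hW))
  rw [ENNReal.smul_def] at ha hn
  have hG := Measure.map_fst_le_smul_restrict ha hsK
  have hH := Measure.map_snd_le_smul_restrict ha hsK
  rw [Measure.map_map measurable_fst hsm] at hG
  rw [Measure.map_map measurable_snd hsm] at hH
  refine ⟨a * μH K₂ * (a * μG K₁ * b) * n, ?_, fun w hw => ?_⟩
  · have := hK₁.measure_ne_top (μ := μG)
    have := hK₂.measure_ne_top (μ := μH)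
    finiteness
  have hHw : mY.map (fun x => (s x).2 * w) ≤ (a * μG K₁ * b) • μH.restrict (K₂ * W) :=
    calc mY.map (fun x => (s x).2 * w) = (mY.map (Prod.snd ∘ s)).map (· * w) :=
          (Measure.map_map (measurable_mul_const w) hsm.snd).symm
      _ ≤ ((a * μG K₁) • μH.restrict K₂).map (· * w) :=
          Measure.map_mono hH (measurable_mul_const w)
      _ ≤ (a * μG K₁) • (b • μH.restrict (K₂ * W)) := by
          rw [Measure.map_smul]; gcongr; exact hμH w hw K₂
      _ = (a * μG K₁ * b) • μH.restrict (K₂ * W) := smul_smul _ _ _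
  calc (mY.prod mY).map (fun p => (((s p.2).1, (s p.1).2 * w) : (G × H) ⧸ Γ))
      = ((mY.map fun x => (s x).1).prod (mY.map fun x => (s x).2 * w)).map (↑) := by
        have hpair : Measurable fun p : ((G × H) ⧸ Γ) × ((G × H) ⧸ Γ) =>
            ((s p.2).1, (s p.1).2 * w) :=
          (hsm.fst.comp measurable_snd).prodMk ((hsm.snd.comp measurable_fst).mul_const w)
        rw [← Measure.map_prod_self_swap _ hsm.fst (hsm.snd.mul_const w),
          Measure.map_map QuotientGroup.measurable_coe hpair]
        rfl
    _ ≤ (((a * μH K₂) • μG.restrict K₁).prod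
          ((a * μG K₁ * b) • μH.restrict (K₂ * W))).map (↑) :=
        Measure.map_mono (Measure.prod_mono hG hHw) QuotientGroup.measurable_coe
    _ = (a * μH K₂ * (a * μG K₁ * b)) • ((μG.prod μH).restrict (K₁ ×ˢ (K₂ * W))).map (↑) := by
        rw [Measure.prod_smul_left, Measure.prod_smul_right, Measure.prod_restrict, smul_smul,
          Measure.map_smul]
    _ ≤ (a * μH K₂ * (a * μG K₁ * b)) • ((n : ℝ≥0∞) • mY) := by gcongr
    _ = (a * μH K₂ * (a * μG K₁ * b) * n) • mY := smul_smul _ _ _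

theorem quasiMeasurePreserving_fst_section (μG : Measure G) [μG.IsHaarMeasure] :
    Measure.QuasiMeasurePreserving (fun x => (s x).1) mY μG := by
  obtain ⟨a, ha⟩ := exists_map_section_le_smul_haar (mY := mY) hs hsm hsb subset_closure
    (μG.prod (Measure.haar : Measure H))
  rw [ENNReal.smul_def] at ha
  exact Measure.quasiMeasurePreserving_fst.comp ⟨hsm, Measure.absolutelyContinuous_of_le_smul ha⟩

end CutAndProject

theorem fubini_chebyshev_selection_general
    (G : Type) [Group G] [TopologicalSpace G] [IsTopologicalGroup G] [T2Space G]
    [LocallyCompactSpace G] [SecondCountableTopology G] [MeasurableSpace G] [BorelSpace G]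
    (H : Type) [Group H] [TopologicalSpace H] [IsTopologicalGroup H] [T2Space H]
    [LocallyCompactSpace H] [SecondCountableTopology H] [MeasurableSpace H] [BorelSpace H]
    (Γ : Subgroup (G × H)) (hCP : IsCutAndProject Γ) (W : Set H) (hW : IsCompact W)
    (mY : Measure ((G × H) ⧸ Γ)) (hprob : IsProbabilityMeasure mY)
    (hinv : SMulInvariantMeasure (G × H) ((G × H) ⧸ Γ) mY)
    (s : (G × H) ⧸ Γ → G × H) (hs : ∀ x, (QuotientGroup.mk (s x) : (G × H) ⧸ Γ) = x)
    (hsm : Measurable s) (hsb : IsCompact (closure (Set.range s)))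
    (μG : Measure G) (hHaar : μG.IsHaarMeasure)
    (Ω : Set (G × ((G × H) ⧸ Γ))) (hΩ : (μG.prod mY) Ωᶜ = 0)
    (φ : (G × H) ⧸ Γ → ℝ) (hφ : Integrable φ mY) :
    ∃ C : ℝ, 0 < C ∧ ∀ γ : ↥Γ, (γ : G × H).2 ∈ W → ∃ x y : (G × H) ⧸ Γ,
      ((s x).1 * (γ : G × H).1 * ((s y).1)⁻¹, x) ∈ Ω ∧ φ x ≤ C ∧
      φ ((((s x).1 * (γ : G × H).1 * ((s y).1)⁻¹, (1 : H)) : G × H)⁻¹ • x) ≤ C := by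
  have : DiscreteTopology Γ := hCP.lattice.1
  have : Countable Γ := TopologicalSpace.separableSpace_iff_countable.mp inferInstance
  obtain ⟨c, hc, hlaw⟩ := exists_map_mk_section_mul_le_smul (mY := mY) hs hsm hsb hW
  have hc₁ : 1 + c ≠ ∞ := ENNReal.add_ne_top.mpr ⟨ENNReal.one_ne_top, hc⟩
  obtain ⟨C, hC, hsmall⟩ :=
    exists_pos_measure_setOf_lt_lt hφ.aemeasurable (ENNReal.inv_pos.mpr hc₁)
  refine ⟨C, hC, fun γ hγ => ?_⟩
  let P : ((G × H) ⧸ Γ) × ((G × H) ⧸ Γ) → (G × H) ⧸ Γ :=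
    fun p => ((s p.2).1, (s p.1).2 * (γ : G × H).2)
  have hP : Measurable P := QuotientGroup.measurable_coe.comp
    ((hsm.fst.comp measurable_snd).prodMk ((hsm.snd.comp measurable_fst).mul_const _))
  have hΩ_ae : ∀ᵐ p ∂mY.prod mY, ((s p.1).1 * (γ : G × H).1 * ((s p.2).1)⁻¹, p.1) ∈ Ω :=
    (quasiMeasurePreserving_mul_inv_prod (hsm.fst.mul_const _)
      (quasiMeasurePreserving_fst_section hs hsm hsb μG)).ae (ae_iff.mpr hΩ)
  have hbad : (mY.prod mY) {p | ¬(φ p.1 ≤ C ∧ φ (P p) ≤ C)} < 1 :=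
    calc _ ≤ (mY.prod mY) (Prod.fst ⁻¹' {x | C < φ x}) + (mY.prod mY) (P ⁻¹' {x | C < φ x}) :=
          (measure_mono fun p hp => by
            simpa only [mem_union, mem_preimage, mem_ofPred_eq, not_and_or, not_le] using hp).trans
            (measure_union_le _ _)
      _ ≤ mY {x | C < φ x} + c * mY {x | C < φ x} := by
          gcongr
          · exact (Measure.le_map_apply measurable_fst.aemeasurable _).trans_eq (by simp)
          · exact (Measure.le_map_apply hP.aemeasurable _).trans (hlaw _ hγ _)
      _ = (1 + c) * mY {x | C < φ x} := by ring
      _ < (1 + c) * (1 + c)⁻¹ := by gcongr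
      _ = 1 := ENNReal.mul_inv_cancel (by simp) hc₁
  obtain ⟨p, hpΩ, hpx, hpy⟩ := exists_and_of_ae_of_measure_lt_one hΩ_ae hbad
  exact ⟨p.1, p.2, hpΩ, hpx, by rwa [inv_smul_eq_mk_of_section hs]⟩

/-- A Fubini/Čebyšev selection lemma for uniform cut-and-project schemes:
given a conull `Ω ⊆ G × Y` and a nonnegative `φ ∈ L¹(Y, m_Y)`, there is `C > 0` such that
for every `γ ∈ Γ` with `π_H(γ) ∈ W` one can find `x, y ∈ Y` with
`(g^γ_{x,y}, x) ∈ Ω`, `φ(x) ≤ C` and `φ((g^γ_{x,y}, 1)⁻¹·x) ≤ C`. -/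
theorem fubini_chebyshev_selection
    (G : Type) [Group G] [TopologicalSpace G] [IsTopologicalGroup G] [T2Space G]
    [LocallyCompactSpace G] [SecondCountableTopology G] [MeasurableSpace G] [BorelSpace G]
    (H : Type) [Group H] [TopologicalSpace H] [IsTopologicalGroup H] [T2Space H]
    [LocallyCompactSpace H] [SecondCountableTopology H] [MeasurableSpace H] [BorelSpace H]
    (Γ : Subgroup (G × H)) (hCP : IsCutAndProject Γ) (W : Set H) (hW : IsCompact W)
    (mY : Measure ((G × H) ⧸ Γ)) (hprob : IsProbabilityMeasure mY)
    (hinv : SMulInvariantMeasure (G × H) ((G × H) ⧸ Γ) mY)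
    (s : (G × H) ⧸ Γ → G × H) (hs : ∀ x, (QuotientGroup.mk (s x) : (G × H) ⧸ Γ) = x)
    (hsm : Measurable s) (hsb : IsCompact (closure (Set.range s)))
    (μG : Measure G) (hHaar : μG.IsHaarMeasure)
    (Ω : Set (G × ((G × H) ⧸ Γ))) (hΩm : MeasurableSet Ω) (hΩ : (μG.prod mY) Ωᶜ = 0)
    (φ : (G × H) ⧸ Γ → ℝ) (hφ : Integrable φ mY) (hφ0 : ∀ x, 0 ≤ φ x) :
    ∃ C : ℝ, 0 < C ∧ ∀ γ : ↥Γ, (γ : G × H).2 ∈ W → ∃ x y : (G × H) ⧸ Γ,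
      ((s x).1 * (γ : G × H).1 * ((s y).1)⁻¹, x) ∈ Ω ∧ φ x ≤ C ∧
      φ ((((s x).1 * (γ : G × H).1 * ((s y).1)⁻¹, (1 : H)) : G × H)⁻¹ • x) ≤ C :=
  fubini_chebyshev_selection_general G H Γ hCP W hW mY hprob hinv s hs hsm hsb μG hHaar Ω hΩ φ hφ
end

section
/- Let (G, H, Γ) be a uniform cut-and-project scheme with H almost connected, let W ⊆ H be a regular symmetric window containing 1, and let Λ = Λ(G,H,Γ,W) be the associated regular symmetric uniform model set. Let Δ ⊆ Λ be a symmetric subset containing 1 which is relatively dense in G. Then the subgroup Δ^∞ of G generated by Δ has finite index in the subgroup Λ^∞ generated by Λ. -/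
open MeasureTheory Set
open scoped Pointwise ENNReal

/-! Let `Ξ` be the set of points of `Γ` whose `G`-coordinate lies in `⟨Δ⟩`, and `S` the closure
of its projection to `H`. Relative density of `Δ`, lifted through the compact window, makes `Ξ`
relatively dense in `G × S`; as `Γ` is discrete, the points of `Γ` with `H`-coordinate in `V * S`
(`V` a compact neighbourhood of `1`) lie in finitely many translates `F * Ξ`. Since `π_H(Γ)` is
dense, a nonempty open set is then covered by finitely many cosets of the closed subgroup `S`,
so `S` is open, hence of finite index because `H` is almost connected. Hence `Ξ` has finite index
in `Γ`, and projecting to `G`, `⟨Δ⟩` has finite index in `π_G(Γ) ⊇ ⟨Λ⟩`. -/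

theorem Set.Finite.interior_biUnion_eq_empty {ι X : Type*} [TopologicalSpace X] {s : Set ι}
    (hs : s.Finite) {f : ι → Set X} (hf : ∀ i ∈ s, IsClosed (f i))
    (hint : ∀ i ∈ s, interior (f i) = ∅) : interior (⋃ i ∈ s, f i) = ∅ := by
  induction s, hs using Set.Finite.induction_on with
  | empty => simp
  | @insert a t _ ht ih =>
    rw [Set.biUnion_insert, union_comm,
      interior_union_isClosed_of_interior_empty
        (ht.isClosed_biUnion fun i hi => hf i (mem_insert_of_mem a hi))
        (hint a (mem_insert a t))]
    exact ih (fun i hi => hf i (mem_insert_of_mem a hi))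
      (fun i hi => hint i (mem_insert_of_mem a hi))

theorem Set.Finite.exists_interior_nonempty_of_isOpen_subset_biUnion {ι X : Type*}
    [TopologicalSpace X] {s : Set ι} (hs : s.Finite) {f : ι → Set X}
    (hf : ∀ i ∈ s, IsClosed (f i)) {U : Set X} (hU : IsOpen U) (hne : U.Nonempty)
    (hUf : U ⊆ ⋃ i ∈ s, f i) : ∃ i ∈ s, (interior (f i)).Nonempty := by
  by_contra! hint
  obtain ⟨x, hx⟩ := hne
  simpa [hs.interior_biUnion_eq_empty hf hint] using interior_maximal hUf hU hx

theorem Subgroup.relIndex_ne_zero_of_subset_mul {G : Type*} [Group G] {H K : Subgroup G}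
    {F : Set G} (hF : F.Finite) (hKF : (K : Set G) ⊆ F * H) : H.relIndex K ≠ 0 := by
  have hsmul (k : K) : k • ((1 : G) : G ⧸ H) = ((k : G) : G ⧸ H) := by
    change (k : G) • ((1 : G) : G ⧸ H) = _
    rw [MulAction.Quotient.smul_mk, smul_eq_mul, mul_one]
  have hstab : H.subgroupOf K = MulAction.stabilizer K ((1 : G) : G ⧸ H) := by
    ext k
    rw [MulAction.mem_stabilizer_iff, hsmul, QuotientGroup.eq, mul_one, inv_mem_iff,
      Subgroup.mem_subgroupOf]
  rw [Subgroup.relIndex, hstab, MulAction.index_stabilizer]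
  refine Set.ncard_ne_zero_of_mem (MulAction.mem_orbit_self _)
    ((hF.image QuotientGroup.mk).subset ?_)
  rintro _ ⟨k, rfl⟩
  obtain ⟨f, hf, h, hh, hfh⟩ := hKF k.2
  refine ⟨f, hf, ?_⟩
  change _ = k • ((1 : G) : G ⧸ H)
  rw [hsmul, ← hfh, QuotientGroup.mk_mul_of_mem f hh]

theorem Subgroup.isOpen_of_subset_biUnion_smul {H : Type*} [Group H] [TopologicalSpace H]
    [IsTopologicalGroup H] {S : Subgroup H} (hS : IsClosed (S : Set H)) {T : Set H}
    (hT : T.Finite) {U : Set H} (hU : IsOpen U) (hne : U.Nonempty)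
    (hUT : U ⊆ ⋃ t ∈ T, t • (S : Set H)) : IsOpen (S : Set H) := by
  obtain ⟨t, -, x, hx⟩ :=
    hT.exists_interior_nonempty_of_isOpen_subset_biUnion (fun t _ => hS.leftCoset t) hU hne hUT
  rw [interior_smul] at hx
  obtain ⟨y, hy, -⟩ := hx
  exact S.isOpen_of_mem_nhds (mem_interior_iff_mem_nhds.mp hy)

theorem Subgroup.finiteIndex_of_isOpen {H : Type*} [Group H] [TopologicalSpace H]
    [IsTopologicalGroup H] [CompactSpace (ConnectedComponents H)] {S : Subgroup H}
    (hS : IsOpen (S : Set H)) : S.FiniteIndex := by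
  have : DiscreteTopology (H ⧸ S) := QuotientGroup.discreteTopology hS
  have hmk : Continuous (QuotientGroup.mk : H → H ⧸ S) := QuotientGroup.continuous_mk
  have : CompactSpace (H ⧸ S) := Function.Surjective.compactSpace
    hmk.connectedComponentsLift_continuous
    (Function.Surjective.of_comp (g := ConnectedComponents.mk)
      (by rw [hmk.connectedComponentsLift_comp_coe]; exact QuotientGroup.mk_surjective))
  have : Finite (H ⧸ S) := finite_of_compact_of_discrete
  exact S.finiteIndex_of_finite_quotient

theorem Subgroup.finite_inter_of_isCompact {G : Type*} [Group G] [TopologicalSpace G]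
    [IsTopologicalGroup G] [T2Space G] (Γ : Subgroup G) [DiscreteTopology Γ] {K : Set G}
    (hK : IsCompact K) : ((Γ : Set G) ∩ K).Finite :=
  (hK.inter_left Γ.isClosed_of_discrete).finite <| isDiscrete_iff_discreteTopology.mpr <|
    DiscreteTopology.of_subset (inferInstanceAs (DiscreteTopology Γ)) inter_subset_left

section CutAndProject

open Topology

variable {G H : Type*} [Group G] [Group H]

theorem exists_mul_inv_mem_prod_of_subset_modelSet [TopologicalSpace G] [TopologicalSpace H]
    [IsTopologicalGroup H] {Ξ : Subgroup (G × H)} {Δ K : Set G} {V W : Set H}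
    (hΔ : Δ ⊆ modelSet Ξ W) (hΔK : Δ * K = univ) (hV : V ∈ 𝓝 (1 : H)) (g : G) {s : H}
    (hs : s ∈ closure (Prod.snd '' (Ξ : Set (G × H)))) :
    ∃ ξ ∈ Ξ, (g, s) * ξ⁻¹ ∈ K⁻¹ ×ˢ (V * W) := by
  obtain ⟨_, ⟨x, hxΞ, rfl⟩, hxs⟩ := mem_closure_iff_nhds_one.mp hs _ (inv_mem_nhds_one H hV)
  obtain ⟨δ, hδ, k, hk, hδk⟩ : x.1 * g⁻¹ ∈ Δ * K := hΔK ▸ mem_univ _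
  obtain ⟨y, ⟨hyΞ, -, hyW⟩, rfl⟩ := hΔ hδ
  -- `x` approximates `s` in `H`; correcting it by the lift `y` of `δ` fixes the `G`-coordinate.
  refine ⟨y⁻¹ * x, Ξ.mul_mem (Ξ.inv_mem hyΞ) hxΞ, ?_, ?_⟩
  · have : ((g, s) * (y⁻¹ * x)⁻¹).1 = k⁻¹ := by
      simp only [mul_inv_rev, inv_inv, Prod.fst_mul, Prod.fst_inv]
      rw [← mul_assoc, ← inv_inv g, ← mul_inv_rev, ← hδk, mul_inv_rev, inv_mul_cancel_right]
    rw [this]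
    exact inv_mem_inv.mpr hk
  · have : s * x.2⁻¹ ∈ V := by simpa [div_eq_mul_inv] using hxs
    simpa [mul_assoc] using mul_mem_mul this hyW

theorem mem_inter_prod_mul_of_snd_mem_mul {Γ Ξ : Subgroup (G × H)} (hΞΓ : Ξ ≤ Γ)
    {K : Set G} {S C V : Set H} (hcov : ∀ g, ∀ s ∈ S, ∃ ξ ∈ Ξ, (g, s) * ξ⁻¹ ∈ K ×ˢ C)
    {x : G × H} (hx : x ∈ Γ) (hxS : x.2 ∈ V * S) :
    x ∈ ((Γ : Set (G × H)) ∩ K ×ˢ (V * C)) * Ξ := by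
  obtain ⟨v, hv, s, hs, hvs⟩ := hxS
  obtain ⟨ξ, hξ, hξ1, hξ2⟩ := hcov x.1 s hs
  refine ⟨x * ξ⁻¹, ⟨Γ.mul_mem hx (Γ.inv_mem (hΞΓ hξ)), hξ1, ?_⟩, ξ, hξ, inv_mul_cancel_right x ξ⟩
  simpa [← hvs, mul_assoc] using mul_mem_mul hv hξ2

theorem isOpen_of_dense_snd_of_subset_mul [TopologicalSpace H] [IsTopologicalGroup H]
    {Γ Ξ : Subgroup (G × H)} {S : Subgroup H} (hS : IsClosed (S : Set H)) (hΞS : ∀ ξ ∈ Ξ, ξ.2 ∈ S)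
    (hΓ : Dense (Prod.snd '' (Γ : Set (G × H)))) {F : Set (G × H)} (hF : F.Finite)
    {V : Set H} (hV : (interior V).Nonempty)
    (hcov : ∀ x ∈ Γ, x.2 ∈ V * (S : Set H) → x ∈ F * Ξ) :
    IsOpen (S : Set H) := by
  have hU : IsOpen (interior V * (S : Set H)) := isOpen_interior.mul_right
  refine S.isOpen_of_subset_biUnion_smul hS (hF.image Prod.snd) hU (hV.mul ⟨1, S.one_mem⟩) <|
    (hΓ.open_subset_closure_inter hU).trans <|
      closure_minimal ?_ ((hF.image _).isClosed_biUnion fun t _ => hS.leftCoset t)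
  rintro _ ⟨hyU, x, hx, rfl⟩
  obtain ⟨f, hf, ξ, hξ, rfl⟩ := hcov x hx (mul_subset_mul_right interior_subset hyU)
  exact mem_biUnion (mem_image_of_mem _ hf) (smul_mem_smul_set (hΞS ξ hξ))

theorem relIndex_ne_zero_of_subset_modelSet [TopologicalSpace G] [IsTopologicalGroup G]
    [T2Space G] [TopologicalSpace H] [IsTopologicalGroup H] [T2Space H] [LocallyCompactSpace H]
    [CompactSpace (ConnectedComponents H)] {Γ Ξ : Subgroup (G × H)} [DiscreteTopology Γ]
    (hΓ : Dense (Prod.snd '' (Γ : Set (G × H)))) (hΞΓ : Ξ ≤ Γ) {Δ K : Set G} {W : Set H}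
    (hK : IsCompact K) (hW : IsCompact W) (hΔ : Δ ⊆ modelSet Ξ W) (hΔK : Δ * K = univ) :
    Ξ.relIndex Γ ≠ 0 := by
  obtain ⟨V, hVc, hV⟩ := exists_compact_mem_nhds (1 : H)
  set S := (Ξ.map (MonoidHom.snd G H)).topologicalClosure
  set F := (Γ : Set (G × H)) ∩ K⁻¹ ×ˢ (V * (V * W))
  have hF : F.Finite := Γ.finite_inter_of_isCompact (hK.inv.prod (hVc.mul (hVc.mul hW)))
  have hcov : ∀ x ∈ Γ, x.2 ∈ V * (S : Set H) → x ∈ F * Ξ := fun x hx hxS =>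
    mem_inter_prod_mul_of_snd_mem_mul hΞΓ
      (fun g s hs => exists_mul_inv_mem_prod_of_subset_modelSet hΔ hΔK hV g
        (by simpa [S, Subgroup.topologicalClosure_coe] using hs)) hx hxS
  have hSopen : IsOpen (S : Set H) :=
    isOpen_of_dense_snd_of_subset_mul (Subgroup.isClosed_topologicalClosure _)
      (fun ξ hξ => Ξ.map _ |>.le_topologicalClosure (Subgroup.mem_map_of_mem _ hξ)) hΓ hF
      ⟨1, mem_interior_iff_mem_nhds.mpr hV⟩ hcov
  have := Subgroup.finiteIndex_of_isOpen hSopen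
  refine Subgroup.relIndex_ne_zero_trans (K := Γ ⊓ S.comap (MonoidHom.snd G H)) ?_ ?_
  · refine Subgroup.relIndex_ne_zero_of_subset_mul hF fun x ⟨hx, hxS⟩ => hcov x hx ?_
    simpa using mul_mem_mul (mem_of_mem_nhds hV) hxS
  · rw [Subgroup.inf_relIndex_left, Subgroup.relIndex_comap]
    exact Subgroup.isFiniteRelIndex_of_finiteIndex.relIndex_ne_zero

end CutAndProject

theorem meyer_enveloping_group_finiteIndex_general
    (G : Type) [Group G] [TopologicalSpace G] [IsTopologicalGroup G] [T2Space G]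
    (H : Type) [Group H] [TopologicalSpace H] [IsTopologicalGroup H] [T2Space H]
    [LocallyCompactSpace H] [MeasurableSpace H]
    (hH : CompactSpace (ConnectedComponents H))
    (Γ : Subgroup (G × H)) (hCP : IsCutAndProject Γ)
    (W : Set H) (hW : IsRegularWindow H Γ W)
    (Δ : Set G) (hΔsub : Δ ⊆ modelSet Γ W)
    (hΔrd : RelativelyDense Δ) :
    (Subgroup.closure Δ).relIndex (Subgroup.closure (modelSet Γ W)) ≠ 0 := by
  obtain ⟨⟨hΓdisc, -⟩, -, hΓdense⟩ := hCP
  obtain ⟨K, hK, hΔK⟩ := hΔrd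
  set Ξ := Γ ⊓ (Subgroup.closure Δ).comap (MonoidHom.fst G H)
  have hΔΞ : Δ ⊆ modelSet Ξ W := by
    intro δ hδ
    obtain ⟨x, ⟨hxΓ, hxW⟩, rfl⟩ := hΔsub hδ
    exact ⟨x, ⟨⟨hxΓ, Subgroup.subset_closure hδ⟩, hxW⟩, rfl⟩
  have hΞ := relIndex_ne_zero_of_subset_modelSet hΓdense inf_le_left hK hW.1 hΔΞ hΔK
  rw [Subgroup.inf_relIndex_left, Subgroup.relIndex_comap] at hΞ
  have hle : Subgroup.closure (modelSet Γ W) ≤ Γ.map (MonoidHom.fst G H) := by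
    rw [Subgroup.closure_le]
    rintro _ ⟨x, ⟨hx, -⟩, rfl⟩
    exact Subgroup.mem_map_of_mem _ hx
  exact fun h => hΞ (Subgroup.relIndex_eq_zero_of_le_right hle h)

/-- For a regular symmetric uniform model set `Λ` of almost connected
type and a symmetric relatively dense subset `Δ ⊆ Λ` containing `1`, the group `Δ^∞`
has finite index in `Λ^∞`. -/
theorem meyer_enveloping_group_finiteIndex
    (G : Type) [Group G] [TopologicalSpace G] [IsTopologicalGroup G] [T2Space G]
    [LocallyCompactSpace G] [SecondCountableTopology G]
    (H : Type) [Group H] [TopologicalSpace H] [IsTopologicalGroup H] [T2Space H]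
    [LocallyCompactSpace H] [SecondCountableTopology H] [MeasurableSpace H] [BorelSpace H]
    (hH : CompactSpace (ConnectedComponents H))
    (Γ : Subgroup (G × H)) (hCP : IsCutAndProject Γ)
    (W : Set H) (hW : IsRegularWindow H Γ W)
    (Δ : Set G) (hΔsub : Δ ⊆ modelSet Γ W) (hΔsym : Δ⁻¹ = Δ) (hΔ1 : (1 : G) ∈ Δ)
    (hΔrd : RelativelyDense Δ) :
    (Subgroup.closure Δ).relIndex (Subgroup.closure (modelSet Γ W)) ≠ 0 :=
  meyer_enveloping_group_finiteIndex_general G H hH Γ hCP W hW Δ hΔsub hΔrd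
end

section
/- Let G be a group and let Σ ⊆ G be an approximate subgroup. If F ⊆ qComm_G(Σ) is a finite set containing the identity, then the enlargement Σ_F := F·Σ ∪ Σ·F⁻¹ is again an approximate subgroup of G, i.e. Σ_F is symmetric, contains the identity, and Σ_F·Σ_F ⊆ Σ_F·F' for some finite F' ⊆ G. -/
open MeasureTheory Set
open scoped Pointwise ENNReal

/-!
Since `F` is finite, a single finite `E` witnesses quasi-commensuration for all `a ∈ F`:
`F·Σ ⊆ Σ·E` and `Σ·F ⊆ E·Σ`; inverting the latter, `F⁻¹·Σ ⊆ Σ·E⁻¹`. Hence `Σ_F ⊆ Σ·(E ∪ F⁻¹)`,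
and, as `Σ ⊆ Σ_F`, `Σ_F·Σ ⊆ F·Σ·F₀ ∪ Σ·Σ·E⁻¹ ⊆ Σ_F·(F₀ ∪ F₀·E⁻¹)`.
So `Σ_F·Σ_F ⊆ Σ_F·(F₀ ∪ F₀·E⁻¹)·(E ∪ F⁻¹)`.
-/

section Monoid

variable {G : Type*} [Monoid G] {A S E K : Set G}

theorem mul_self_subset_mul_mul_of_subset_mul (hA : A ⊆ S * E) (hAS : A * S ⊆ A * K) :
    A * A ⊆ A * (K * E) :=
  calc A * A ⊆ A * (S * E) := mul_subset_mul_left hA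
    _ = A * S * E := (mul_assoc ..).symm
    _ ⊆ A * K * E := mul_subset_mul_right hAS
    _ = A * (K * E) := mul_assoc ..

end Monoid

section Mul

variable {G : Type*} [Mul G]

def QuasiCommensurates (S : Set G) (a : G) : Prop :=
  ∃ T : Set G, T.Finite ∧ {a} * S ⊆ S * T ∧ S * {a} ⊆ T * S

theorem Set.Finite.exists_finite_mul_subset_of_quasiCommensurates {S F : Set G} (hF : F.Finite)
    (h : ∀ a ∈ F, QuasiCommensurates S a) :
    ∃ E : Set G, E.Finite ∧ F * S ⊆ S * E ∧ S * F ⊆ E * S := by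
  choose! T hT hleft hright using h
  refine ⟨⋃ a ∈ F, T a, hF.biUnion hT, ?_, ?_⟩
  · calc F * S = ⋃ a ∈ F, {a} * S := by rw [← iUnion₂_mul, biUnion_of_singleton]
      _ ⊆ ⋃ a ∈ F, S * T a := iUnion₂_mono hleft
      _ = S * ⋃ a ∈ F, T a := (mul_iUnion₂ ..).symm
  · calc S * F = ⋃ a ∈ F, S * {a} := by rw [← mul_iUnion₂, biUnion_of_singleton]
      _ ⊆ ⋃ a ∈ F, T a * S := iUnion₂_mono hright
      _ = (⋃ a ∈ F, T a) * S := (iUnion₂_mul ..).symm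

end Mul

section Group

variable {G : Type*} [Group G] {S F F₀ E : Set G}

theorem inv_mul_subset_mul_inv (hS : S⁻¹ = S) (h : S * F ⊆ E * S) : F⁻¹ * S ⊆ S * E⁻¹ := by
  simpa only [mul_inv_rev, hS] using inv_subset_inv.mpr h

/-- Unlike Mathlib's `IsApproximateSubgroup`, the covering is by right translates and the
number of translates is not recorded. -/
def IsApproxSubgroup (S : Set G) : Prop :=
  S⁻¹ = S ∧ (1 : G) ∈ S ∧ ∃ F₀ : Set G, F₀.Finite ∧ S * S ⊆ S * F₀

def enlargement (F S : Set G) : Set G :=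
  F * S ∪ S * F⁻¹

theorem inv_enlargement (hS : S⁻¹ = S) : (enlargement F S)⁻¹ = enlargement F S := by
  rw [enlargement, union_inv, mul_inv_rev, mul_inv_rev, inv_inv, hS, union_comm]

theorem subset_enlargement (hF : (1 : G) ∈ F) : S ⊆ enlargement F S :=
  (subset_mul_right S hF).trans subset_union_left

theorem enlargement_subset_mul (h : F * S ⊆ S * E) : enlargement F S ⊆ S * (E ∪ F⁻¹) := by
  rw [mul_union]
  exact union_subset_union h subset_rfl

theorem enlargement_mul_subset (hF : (1 : G) ∈ F) (hSS : S * S ⊆ S * F₀)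
    (h : F⁻¹ * S ⊆ S * E) : enlargement F S * S ⊆ enlargement F S * (F₀ ∪ F₀ * E) := by
  set A := enlargement F S
  have hSA : S ⊆ A := subset_enlargement hF
  have hFS : F * S * S ⊆ A * F₀ :=
    calc F * S * S = F * (S * S) := mul_assoc ..
      _ ⊆ F * (S * F₀) := mul_subset_mul_left hSS
      _ = F * S * F₀ := (mul_assoc ..).symm
      _ ⊆ A * F₀ := mul_subset_mul_right subset_union_left
  have hSF : S * F⁻¹ * S ⊆ A * (F₀ * E) :=
    calc S * F⁻¹ * S = S * (F⁻¹ * S) := mul_assoc ..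
      _ ⊆ S * (S * E) := mul_subset_mul_left h
      _ = S * S * E := (mul_assoc ..).symm
      _ ⊆ S * F₀ * E := mul_subset_mul_right hSS
      _ ⊆ A * F₀ * E := mul_subset_mul_right (mul_subset_mul_right hSA)
      _ = A * (F₀ * E) := mul_assoc ..
  calc A * S = F * S * S ∪ S * F⁻¹ * S := union_mul
    _ ⊆ A * F₀ ∪ A * (F₀ * E) := union_subset_union hFS hSF
    _ = A * (F₀ ∪ F₀ * E) := mul_union.symm

theorem IsApproxSubgroup.enlargement (hS : IsApproxSubgroup S) (hF : F.Finite)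
    (hF1 : (1 : G) ∈ F) (hqc : ∀ a ∈ F, QuasiCommensurates S a) :
    IsApproxSubgroup (enlargement F S) := by
  obtain ⟨hinv, hone, F₀, hF₀, hSS⟩ := hS
  obtain ⟨E, hE, hleft, hright⟩ := hF.exists_finite_mul_subset_of_quasiCommensurates hqc
  refine ⟨inv_enlargement hinv, subset_enlargement hF1 hone, (F₀ ∪ F₀ * E⁻¹) * (E ∪ F⁻¹),
    (hF₀.union (hF₀.mul hE.inv)).mul (hE.union hF.inv), ?_⟩
  exact mul_self_subset_mul_mul_of_subset_mul (enlargement_subset_mul hleft)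
    (enlargement_mul_subset hF1 hSS (inv_mul_subset_mul_inv hinv hright))

end Group

/-- The enlargement `Σ_F = F·Σ ∪ Σ·F⁻¹` of an approximate subgroup `Σ`
by a finite set `F ∋ 1` of quasi-commensurating elements is again an approximate
subgroup. -/
theorem enlargement_is_approximate_subgroup
    (G : Type) [Group G] (S : Set G) (hsym : S⁻¹ = S) (h1 : (1 : G) ∈ S)
    (hap : ∃ F₀ : Set G, F₀.Finite ∧ S * S ⊆ S * F₀)
    (F : Set G) (hF : F.Finite) (hF1 : (1 : G) ∈ F)
    (hqc : ∀ a ∈ F, ∃ Fa : Set G, Fa.Finite ∧ {a} * S ⊆ S * Fa ∧ S * {a} ⊆ Fa * S) :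
    (F * S ∪ S * F⁻¹)⁻¹ = F * S ∪ S * F⁻¹ ∧ (1 : G) ∈ F * S ∪ S * F⁻¹ ∧
    ∃ F' : Set G, F'.Finite ∧
      (F * S ∪ S * F⁻¹) * (F * S ∪ S * F⁻¹) ⊆ (F * S ∪ S * F⁻¹) * F' :=
  IsApproxSubgroup.enlargement ⟨hsym, h1, hap⟩ hF hF1 hqc
end
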